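/- arXiv:2603.27447 — 5 statements merged into one kernel-verified Lean document; each statement's English description precedes it below -/
import Mathlib

section
/- If G' is a finite-index subgroup of a group G, then G satisfies ωACC (every ascending chain of subgroups of uniformly bounded rank stabilizes) if and only if G' satisfies ωACC. -/
/-- `RankLE H r`: the subgroup `H` is generated by at most `r` elements. -/
def RankLE {G : Type*} [Group G] (H : Subgroup G) (r : ℕ) : Prop :=
  ∃ S : Finset G, (S : Set G) ⊆ (H : Set G) ∧ Subgroup.closure (S : Set G) = H ∧ S.card ≤ r

/-- A group satisfies ωACC if every ascending chain of subgroups of uniformly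
bounded rank is eventually constant. -/
def OmegaACC (G : Type*) [Group G] : Prop :=
  ∀ r : ℕ, ∀ H : ℕ → Subgroup G, Monotone H → (∀ n, RankLE (H n) r) →
    ∃ N, ∀ n, N ≤ n → H n = H N

/-!
Subgroups of `G'` are subgroups of `G` of the same rank, so ωACC passes from `G` to `G'`.
Conversely, let `H₀ ≤ H₁ ≤ ⋯` be a chain in `G` of rank at most `r`. By Schreier's lemma the
`Hₙ ∩ G'` have rank at most `[G : G'] · r`, so they stabilize, and the images of the `Hₙ` in the
finite set `G ⧸ G'` stabilize too. Once both have stabilized, the chain is constant: an element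
of `Hₙ` has the same coset as some element of `H_N`, and their quotient lies in
`Hₙ ∩ G' = H_N ∩ G'`.
-/

open Subgroup

section

variable {G K : Type*} [Group G] [Group K]

lemma rankLE_of_closure_eq {H : Subgroup G} {r : ℕ} {S : Finset G}
    (hS : closure (S : Set G) = H) (hcard : S.card ≤ r) : RankLE H r :=
  ⟨S, hS ▸ subset_closure, hS, hcard⟩

lemma RankLE.mono {H : Subgroup G} {r s : ℕ} (h : RankLE H r) (hrs : r ≤ s) : RankLE H s :=
  let ⟨S, hSH, hS, hcard⟩ := h
  ⟨S, hSH, hS, hcard.trans hrs⟩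

lemma RankLE.map {H : Subgroup G} {r : ℕ} (h : RankLE H r) (f : G →* K) :
    RankLE (H.map f) r := by
  classical
  obtain ⟨S, -, rfl, hcard⟩ := h
  exact rankLE_of_closure_eq (by rw [Finset.coe_image, MonoidHom.map_closure])
    (Finset.card_image_le.trans hcard)

lemma rankLE_range_rank [Group.FG K] (f : K →* G) : RankLE f.range (Group.rank K) := by
  obtain ⟨S, hcard, hS⟩ := Group.rank_spec K
  rw [MonoidHom.range_eq_map, ← hS]
  exact (rankLE_of_closure_eq rfl hcard.le).map f

lemma RankLE.exists_fg_rank_le {H : Subgroup G} {r : ℕ} (h : RankLE H r) :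
    ∃ _ : Group.FG H, Group.rank H ≤ r := by
  obtain ⟨S, -, rfl, hcard⟩ := h
  exact ⟨Group.closure_finset_fg S, (rank_closure_finset_le_card S).trans hcard⟩

lemma RankLE.subgroupOf {H : Subgroup G} {r : ℕ} (h : RankLE H r) (L : Subgroup G)
    [L.FiniteIndex] : RankLE (H.subgroupOf L) (L.index * r) := by
  obtain ⟨_, hrank⟩ := h.exists_fg_rank_le
  have hindex : L.relIndex H ≤ L.index := by
    simpa only [relIndex_top_right] using relIndex_le_of_le_right (H := L) (le_top : H ≤ ⊤)
      (by simpa only [relIndex_top_right] using FiniteIndex.index_ne_zero)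
  let f : L.subgroupOf H →* L :=
    (H.subtype.comp (L.subgroupOf H).subtype).codRestrict L fun x => x.2
  have hf : f.range = H.subgroupOf L := by
    ext x
    refine ⟨?_, fun hx => ⟨⟨⟨x, hx⟩, x.2⟩, rfl⟩⟩
    rintro ⟨y, rfl⟩
    exact (y : H).2
  have hrankLH : Group.rank (L.subgroupOf H) ≤ L.index * r :=
    (rank_le_index_mul_rank _).trans (Nat.mul_le_mul hindex hrank)
  exact hf ▸ (rankLE_range_rank f).mono hrankLH

lemma OmegaACC.of_injective {f : K →* G} (hf : Function.Injective f) (hG : OmegaACC G) :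
    OmegaACC K := by
  intro r H hH hrank
  obtain ⟨N, hN⟩ := hG r (fun n => (H n).map f) (fun _ _ hmn => map_mono (hH hmn))
    fun n => (hrank n).map f
  exact ⟨N, fun n hn => map_injective hf (hN n hn)⟩

lemma Subgroup.le_of_inf_le_of_image_subset {H K L : Subgroup G} (hKH : K ≤ H)
    (hinf : H ⊓ L ≤ K)
    (himage : (QuotientGroup.mk '' (H : Set G) : Set (G ⧸ L)) ⊆ QuotientGroup.mk '' K) :
    H ≤ K := by
  intro h hh
  obtain ⟨k, hk, hkh⟩ := himage ⟨h, hh, rfl⟩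
  have hquot : k⁻¹ * h ∈ K :=
    hinf (mem_inf.mpr ⟨mul_mem (inv_mem (hKH hk)) hh, QuotientGroup.eq.mp hkh⟩)
  simpa using mul_mem hk hquot

lemma OmegaACC.of_finiteIndex {L : Subgroup G} [L.FiniteIndex] (hL : OmegaACC L) :
    OmegaACC G := by
  intro r H hH hrank
  obtain ⟨N₁, hN₁⟩ := hL (L.index * r) (fun n => (H n).subgroupOf L)
    (fun _ _ hmn => comap_mono (hH hmn)) fun n => (hrank n).subgroupOf L
  obtain ⟨N₂, hN₂⟩ := WellFoundedGT.monotone_chain_condition (α := Set (G ⧸ L))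
    ⟨fun n => QuotientGroup.mk '' (H n : Set G), fun _ _ hmn => Set.image_mono (hH hmn)⟩
  refine ⟨max N₁ N₂, fun n hn => le_antisymm ?_ (hH hn)⟩
  refine le_of_inf_le_of_image_subset (L := L) (hH hn) ?_ ?_
  · rw [subgroupOf_inj.mp (hN₁ n (le_of_max_le_left hn))]
    exact inf_le_left.trans (hH (le_max_left _ _))
  · exact (hN₂ n (le_of_max_le_right hn)).symm.subset.trans
      (Set.image_mono (hH (le_max_right _ _)))

end

/-- If `G'` is a finite-index subgroup of `G`, then `G` satisfies ωACC iff `G'` does. -/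
theorem finiteIndex_omegaACC_iff {G : Type*} [Group G] (G' : Subgroup G)
    [G'.FiniteIndex] : OmegaACC G ↔ OmegaACC G' :=
  ⟨OmegaACC.of_injective G'.subtype_injective, OmegaACC.of_finiteIndex⟩
end

section
/- Let 1 → N → G → S → 1 be a short exact sequence of groups. If N is Noetherian (every ascending chain of subgroups stabilizes) and S satisfies ωACC, then G satisfies ωACC. -/
/-- A group is Noetherian if every ascending chain of subgroups is eventually constant. -/
def GroupNoetherian (G : Type*) [Group G] : Prop :=
  ∀ H : ℕ → Subgroup G, Monotone H → ∃ N, ∀ n, N ≤ n → H n = H N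

/-- Let `1 → N → G → S → 1` be a short exact sequence of groups. If `N` is Noetherian
and `S` satisfies ωACC, then `G` satisfies ωACC. -/
theorem omegaACC_of_noetherian_extension {N G S : Type*} [Group N] [Group G] [Group S]
    (i : N →* G) (p : G →* S) (hi : Function.Injective i) (hp : Function.Surjective p)
    (hex : i.range = p.ker) (hN : GroupNoetherian N) (hS : OmegaACC S) :
    OmegaACC G := by
  classical
  intro r H hmono hrank
  -- the image chain in S
  have hSmono : Monotone (fun n => (H n).map p) := fun a b hab => Subgroup.map_mono (hmono hab)
  have hSrank : ∀ n, RankLE ((H n).map p) r := by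
    intro n
    obtain ⟨T, hT1, hT2, hT3⟩ := hrank n
    refine ⟨T.image p, ?_, ?_, Finset.card_image_le.trans hT3⟩
    · intro x hx
      simp only [Finset.coe_image, Set.mem_image] at hx
      obtain ⟨y, hy, rfl⟩ := hx
      exact ⟨y, hT1 hy, rfl⟩
    · rw [Finset.coe_image, ← hT2, ← MonoidHom.map_closure]
  obtain ⟨M1, hM1⟩ := hS r _ hSmono hSrank
  -- the preimage chain in N
  have hNmono : Monotone (fun n => (H n).comap i) := fun a b hab => Subgroup.comap_mono (hmono hab)
  obtain ⟨M2, hM2⟩ := hN _ hNmono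
  refine ⟨max M1 M2, fun n hn => le_antisymm ?_ (hmono hn)⟩
  intro x hx
  have hmap : (H n).map p = (H (max M1 M2)).map p := by
    rw [hM1 n (le_trans (le_max_left _ _) hn), hM1 (max M1 M2) (le_max_left _ _)]
  have hcomap : (H n).comap i = (H (max M1 M2)).comap i := by
    rw [hM2 n (le_trans (le_max_right _ _) hn), hM2 (max M1 M2) (le_max_right _ _)]
  have : p x ∈ (H (max M1 M2)).map p := hmap ▸ ⟨x, hx, rfl⟩
  obtain ⟨y, hy, hpy⟩ := this
  have hker : x * y⁻¹ ∈ p.ker := by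
    simp [MonoidHom.mem_ker, hpy]
  obtain ⟨z, hz⟩ : x * y⁻¹ ∈ i.range := hex ▸ hker
  have hzH : z ∈ (H n).comap i := by
    have : x * y⁻¹ ∈ H n := mul_mem hx (inv_mem (hmono hn hy))
    simpa [Subgroup.mem_comap, hz] using this
  have hzH' : i z ∈ H (max M1 M2) := (hcomap ▸ hzH : z ∈ (H (max M1 M2)).comap i)
  have : x = i z * y := by rw [hz]; group
  rw [this]
  exact mul_mem hzH' hy
end

section
/- Let H be a group, let B_1, …, B_n be subgroups of H, and let A_1, …, A_t be representatives of the conjugacy classes (under conjugation in H) of the subgroups B_1, …, B_n. Then there exists a subgroup K with ⟨B_1, …, B_n⟩ ≤ K ≤ H and rank(K) ≤ Σ_{j=1}^t rank(A_j) + n − t. -/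
/-- Two subgroups of `G` are conjugate. -/
def SubgroupConj {G : Type*} [Group G] (A B : Subgroup G) : Prop :=
  ∃ h : G, A.map (MulAut.conj h).toMonoidHom = B

lemma conj_map_map {G : Type*} [Group G] (A : Subgroup G) (x y : G) :
    (A.map (MulAut.conj x).toMonoidHom).map (MulAut.conj y).toMonoidHom
      = A.map (MulAut.conj (y * x)).toMonoidHom := by
  rw [Subgroup.map_map]
  congr 1
  ext z
  simp [mul_assoc]

lemma conj_map_one {G : Type*} [Group G] (A : Subgroup G) :
    A.map (MulAut.conj (1 : G)).toMonoidHom = A := by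
  have : (MulAut.conj (1 : G)).toMonoidHom = MonoidHom.id G := by
    ext z; simp
  rw [this, Subgroup.map_id]

/-- Let `B 1, …, B n` be subgroups of a group `H`, and let `A 1, …, A t` be
representatives of the conjugacy classes of the `B i`.  Then there is a subgroup `K`
with `⟨B 1, …, B n⟩ ≤ K ≤ H` and `rank K ≤ ∑ j rank (A j) + n − t`. -/
theorem exists_subgroup_rank_le_of_conj_reps {H : Type*} [Group H] (n t : ℕ)
    (B : Fin n → Subgroup H) (A : Fin t → Subgroup H) (a : Fin t → ℕ)
    -- every `B i` is conjugate to some representative `A j`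
    (hrep : ∀ i, ∃ j, SubgroupConj (A j) (B i))
    -- every representative is conjugate to one of the `B i`
    (hofB : ∀ j, ∃ i, SubgroupConj (A j) (B i))
    -- the representatives are pairwise non-conjugate
    (hdistinct : ∀ j j', SubgroupConj (A j) (A j') → j = j')
    -- `a j` is an upper bound for the rank of `A j`
    (hA : ∀ j, RankLE (A j) (a j)) :
    ∃ K : Subgroup H, (⨆ i, B i) ≤ K ∧ RankLE K ((∑ j, a j) + n - t) := by
  classical
  choose ι g hg using hofB
  choose κ h hh using hrep
  have hιinj : Function.Injective ι := by
    intro j j' hjj'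
    apply hdistinct
    refine ⟨(g j')⁻¹ * g j, ?_⟩
    rw [← conj_map_map, hg j, hjj', ← hg j', conj_map_map, inv_mul_cancel]
    exact conj_map_one _
  choose S hS1 hS2 hS3 using hA
  set d : Fin n → H := fun i => h i * (g (κ i))⁻¹ with hd
  set T1 : Finset H :=
    Finset.univ.biUnion (fun j : Fin t => (S j).image (fun x => g j * x * (g j)⁻¹)) with hT1
  set T2 : Finset H := (Finset.univ.filter (fun i : Fin n => ∀ j, ι j ≠ i)).image d with hT2
  set T : Finset H := T1 ∪ T2 with hT
  have hBι : ∀ j, B (ι j) ≤ Subgroup.closure (T : Set H) := by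
    intro j
    rw [← hg j, ← hS2 j, MonoidHom.map_closure]
    apply Subgroup.closure_mono
    rintro x ⟨y, hy, rfl⟩
    have : g j * y * (g j)⁻¹ ∈ T1 := by
      rw [hT1, Finset.mem_biUnion]
      exact ⟨j, Finset.mem_univ _, Finset.mem_image.2 ⟨y, hy, rfl⟩⟩
    simp only [hT, Finset.coe_union, Set.mem_union, Finset.mem_coe]
    left
    · simpa using this
  have hBd : ∀ i, B i = (B (ι (κ i))).map (MulAut.conj (d i)).toMonoidHom := by
    intro i
    rw [← hg (κ i), conj_map_map, hd]
    have : h i * (g (κ i))⁻¹ * g (κ i) = h i := by group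
    rw [this, hh i]
  refine ⟨Subgroup.closure (T : Set H), ?_, ?_⟩
  · apply iSup_le
    intro i
    by_cases hcase : ∃ j, ι j = i
    · obtain ⟨j, rfl⟩ := hcase
      exact hBι j
    · have hdT : d i ∈ Subgroup.closure (T : Set H) := by
        apply Subgroup.subset_closure
        simp only [hT, Finset.coe_union, Set.mem_union, Finset.mem_coe]
        right
        rw [hT2, Finset.mem_image]
        refine ⟨i, ?_, rfl⟩
        simp only [Finset.mem_filter, Finset.mem_univ, true_and]
        intro j hj
        exact hcase ⟨j, hj⟩
      rw [hBd i]
      rintro x ⟨b, hb, rfl⟩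
      have hbK := hBι (κ i) hb
      simp only [MulEquiv.coe_toMonoidHom, MulAut.conj_apply]
      exact mul_mem (mul_mem hdT hbK) (inv_mem hdT)
  · refine ⟨T, Subgroup.subset_closure, rfl, ?_⟩
    have htn : t ≤ n := by
      have := Fintype.card_le_of_injective ι hιinj
      simpa using this
    have h1 : T1.card ≤ ∑ j, a j := by
      calc T1.card ≤ ∑ j : Fin t, ((S j).image (fun x => g j * x * (g j)⁻¹)).card :=
            Finset.card_biUnion_le
        _ ≤ ∑ j, a j := by
            apply Finset.sum_le_sum
            intro j _
            exact le_trans (Finset.card_image_le) (hS3 j)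
    have h2 : T2.card ≤ n - t := by
      have heq : Finset.univ.filter (fun i : Fin n => ∀ j, ι j ≠ i)
          = Finset.univ \ Finset.univ.image ι := by
        ext i
        simp [eq_comm]
      calc T2.card ≤ (Finset.univ.filter (fun i : Fin n => ∀ j, ι j ≠ i)).card :=
            Finset.card_image_le
        _ = n - t := by
            rw [heq, Finset.card_sdiff_of_subset (Finset.subset_univ _),
              Finset.card_image_of_injective _ hιinj]
            simp
    calc T.card ≤ T1.card + T2.card := Finset.card_union_le _ _
      _ ≤ (∑ j, a j) + (n - t) := add_le_add h1 h2
      _ = (∑ j, a j) + n - t := by omega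
end

section
/- Let G be a group acting on a tree T without edge inversions, and suppose the action is k-acylindrical, meaning the pointwise stabilizer of any path of length k+1 in T is trivial. Let K_1 ≤ K_2 ≤ … be an ascending chain of subgroups of G such that each K_i fixes at least one vertex of T (is elliptic). Then there exists a vertex of T fixed by all K_i simultaneously. -/
/-!
Fixed-point sets of subgroups acting on a tree are subtrees, and `Fix (K j) ⊆ Fix (K i)` for
`i ≤ j`. Once some `K i₀` contains `g₀ ≠ 1`, the element `g₀` fixes a point `x` of `Fix (K i₀)`
and every later fixed subtree, so by acylindricity each `Fix (K i)` meets the `k`-ball around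
`x`; the distance from `x` to `Fix (K i)` is thus a bounded monotone sequence of naturals. At an
index `N` where it is maximal, the nearest point of `Fix (K N)` to `x` lies in every later
`Fix (K j)`: the nearest point of `Fix (K j)` is at the same distance from `x`, and nearest
points to a subtree of a tree are unique.
-/

namespace SimpleGraph

variable {V : Type*} {T : SimpleGraph V}

/-- In a tree, the path-convex sets are the vertex sets of subtrees. -/
def IsPathConvex (T : SimpleGraph V) (S : Set V) : Prop :=
  ∀ ⦃u v : V⦄, u ∈ S → v ∈ S → ∀ p : T.Walk u v, p.IsPath → ∀ y ∈ p.support, y ∈ S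

theorem Walk.dist_lt_of_mem_support_of_length_eq_dist {u v w : V} {p : T.Walk u v}
    (hp : p.length = T.dist u v) (hw : w ∈ p.support) (hwv : w ≠ v) :
    T.dist u w < T.dist u v := by
  classical
  exact hp ▸ (dist_le _).trans_lt (p.length_takeUntil_lt_length hw hwv)

theorem IsAcyclic.length_eq_dist_of_isPath (hT : T.IsAcyclic) {u v : V} {p : T.Walk u v}
    (hp : p.IsPath) : p.length = T.dist u v := by
  obtain ⟨q, hq, hq_len⟩ := p.reachable.exists_path_of_dist
  have hpq : p = q := congrArg Subtype.val ((hT.subsingleton_path u v).elim ⟨p, hp⟩ ⟨q, hq⟩)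
  rw [hpq, hq_len]

theorem IsAcyclic.apply_eq_of_mem_support (hT : T.IsAcyclic) (f : T →g T)
    (hf : Function.Injective f) {u v : V} (hu : f u = u) (hv : f v = v) {p : T.Walk u v}
    (hp : p.IsPath) {x : V} (hx : x ∈ p.support) : f x = x := by
  have hmap : (p.map f).copy hu hv = p :=
    congrArg Subtype.val <| (hT.subsingleton_path u v).elim
      ⟨_, (Walk.isPath_copy _ _ _).mpr (hp.map hf)⟩ ⟨p, hp⟩
  have hsupp : p.support.map f = p.support.map id := by
    rw [List.map_id, ← Walk.support_map, ← Walk.support_copy _ hu hv, hmap]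
  exact List.map_eq_map_iff.mp hsupp x hx

theorem IsAcyclic.dist_eq_dist_add_length (hT : T.IsAcyclic) {x v w : V} (hxv : T.Reachable x v)
    {p : T.Walk v w} (hp : p.IsPath) (hmin : ∀ y ∈ p.support, T.dist x v ≤ T.dist x y) :
    T.dist x w = T.dist x v + p.length := by
  obtain ⟨q, hq, hq_len⟩ := hxv.exists_path_of_dist
  have hv_tail : v ∉ p.support.tail := by
    have := hp.support_nodup
    rw [← Walk.cons_tail_support, List.nodup_cons] at this
    exact this.1
  -- A vertex shared by `q` and `p` other than `v` would be strictly closer to `x` than `v`.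
  have hqp : (q.append p).IsPath := by
    rw [Walk.isPath_def, Walk.support_append, List.nodup_append]
    refine ⟨hq.support_nodup, hp.support_nodup.sublist (List.tail_sublist _), ?_⟩
    rintro y hyq _ hyp rfl
    have hyv : y ≠ v := by rintro rfl; exact hv_tail hyp
    exact (hmin y (List.mem_of_mem_tail hyp)).not_gt
      (Walk.dist_lt_of_mem_support_of_length_eq_dist hq_len hyq hyv)
  rw [← hT.length_eq_dist_of_isPath hqp, Walk.length_append, hq_len]

theorem IsTree.eq_of_isPathConvex_of_dist_le (hT : T.IsTree) {S : Set V} (hS : T.IsPathConvex S)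
    {x v w : V} (hv : v ∈ S) (hw : w ∈ S) (hmin : ∀ y ∈ S, T.dist x v ≤ T.dist x y)
    (hwv : T.dist x w ≤ T.dist x v) : w = v := by
  obtain ⟨p, hp, -⟩ := hT.connected.exists_path_of_dist v w
  have hdist := hT.isAcyclic.dist_eq_dist_add_length (hT.connected x v) hp
    (fun y hy => hmin y (hS hv hw p hp y hy))
  exact (Walk.eq_of_length_eq_zero (p := p) (by omega)).symm

theorem IsTree.exists_forall_mem_of_antitone (hT : T.IsTree) {S : ℕ → Set V} (hS : Antitone S)
    (hconv : ∀ i, T.IsPathConvex (S i)) (x : V) (k : ℕ)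
    (hbdd : ∀ i, ∃ v ∈ S i, T.dist x v ≤ k) : ∃ v, ∀ i, v ∈ S i := by
  classical
  have hne : ∀ i, ∃ n, ∃ v ∈ S i, T.dist x v = n := fun i =>
    let ⟨v, hv, _⟩ := hbdd i; ⟨_, v, hv, rfl⟩
  let d : ℕ → ℕ := fun i => Nat.find (hne i)
  have hd_spec : ∀ i, ∃ v ∈ S i, T.dist x v = d i := fun i => Nat.find_spec (hne i)
  have hd_min : ∀ i, ∀ v ∈ S i, d i ≤ T.dist x v := fun i v hv => Nat.find_min' _ ⟨v, hv, rfl⟩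
  have hd_mono : Monotone d := fun i j hij => by
    obtain ⟨w, hw, hwd⟩ := hd_spec j
    exact hwd ▸ hd_min i w (hS hij hw)
  have hd_bdd : BddAbove (Set.range d) := ⟨k, by
    rintro _ ⟨i, rfl⟩
    obtain ⟨v, hv, hvk⟩ := hbdd i
    exact (hd_min i v hv).trans hvk⟩
  obtain ⟨N, hN⟩ := Nat.sSup_mem (Set.range_nonempty d) hd_bdd
  have hd_le : ∀ i, d i ≤ d N := fun i => hN ▸ le_csSup hd_bdd ⟨i, rfl⟩
  obtain ⟨v, hv, hvd⟩ := hd_spec N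
  refine ⟨v, fun i => ?_⟩
  obtain ⟨w, hw, hwd⟩ := hd_spec (max i N)
  have hwv : w = v := hT.eq_of_isPathConvex_of_dist_le (hconv N) hv (hS (le_max_right i N) hw)
    (fun y hy => hvd ▸ hd_min N y hy) (by rw [hwd, hvd]; exact hd_le _)
  exact hS (le_max_left i N) (hwv ▸ hw)

section Action

variable {G : Type*} [Group G] [MulAction G V]

theorem IsAcyclic.isPathConvex_setOf_forall_smul_eq (hT : T.IsAcyclic)
    (hadj : ∀ (g : G) (u v : V), T.Adj u v → T.Adj (g • u) (g • v)) (s : Set G) :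
    T.IsPathConvex {v | ∀ g ∈ s, g • v = v} := fun _ _ hu hv _ hp _ hy g hg =>
  hT.apply_eq_of_mem_support ⟨(g • ·), hadj g _ _⟩ (MulAction.injective g) (hu g hg) (hv g hg)
    hp hy

theorem IsTree.dist_le_of_smul_eq_self (hT : T.IsTree)
    (hadj : ∀ (g : G) (u v : V), T.Adj u v → T.Adj (g • u) (g • v)) {k : ℕ}
    (hacyl : ∀ (g : G) (u v : V) (p : T.Walk u v), p.IsPath → p.length = k + 1 →
      (∀ x ∈ p.support, g • x = x) → g = 1)
    {g : G} (hg : g ≠ 1) {u v : V} (hu : g • u = u) (hv : g • v = v) : T.dist u v ≤ k := by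
  by_contra! hk
  obtain ⟨p, hp, hp_len⟩ := hT.connected.exists_path_of_dist u v
  have hfix : ∀ y ∈ p.support, g • y = y := fun y hy =>
    hT.isAcyclic.apply_eq_of_mem_support ⟨(g • ·), hadj g _ _⟩ (MulAction.injective g) hu hv hp hy
  refine hg (hacyl g u _ (p.take (k + 1)) (hp.take _) (by rw [Walk.take_length]; omega)
    fun y hy => hfix y ?_)
  rw [Walk.support_take] at hy
  exact List.mem_of_mem_take hy

end Action

end SimpleGraph

open SimpleGraph in
theorem exists_common_fixed_vertex_of_elliptic_chain_general {V : Type*} {G : Type*} [Group G]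
    [MulAction G V] (T : SimpleGraph V) (hT : T.IsTree)
    (hadj : ∀ (g : G) (u v : V), T.Adj u v → T.Adj (g • u) (g • v))
    (k : ℕ)
    (hacyl : ∀ (g : G) (u v : V) (p : T.Walk u v), p.IsPath → p.length = k + 1 →
      (∀ x ∈ p.support, g • x = x) → g = 1)
    (K : ℕ → Subgroup G) (hmono : Monotone K)
    (hell : ∀ i, ∃ v : V, ∀ g ∈ K i, g • v = v) :
    ∃ v : V, ∀ i, ∀ g ∈ K i, g • v = v := by
  rcases em (∃ i, ∃ g ∈ K i, g ≠ 1) with ⟨i₀, g₀, hg₀, hg₀_ne⟩ | htriv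
  · obtain ⟨x, hx⟩ := hell i₀
    refine hT.exists_forall_mem_of_antitone (S := fun i => {v | ∀ g ∈ K i, g • v = v})
      (fun i j hij v hv g hg => hv g (hmono hij hg))
      (fun i => hT.isAcyclic.isPathConvex_setOf_forall_smul_eq hadj (K i)) x k (fun i => ?_)
    obtain ⟨v, hv⟩ := hell (max i i₀)
    exact ⟨v, fun g hg => hv g (hmono (le_max_left i i₀) hg),
      hT.dist_le_of_smul_eq_self hadj hacyl hg₀_ne (hx g₀ hg₀)
        (hv g₀ (hmono (le_max_right i i₀) hg₀))⟩
  · push Not at htriv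
    obtain ⟨v, -⟩ := hell 0
    exact ⟨v, fun i g hg => by rw [htriv i g hg, one_smul]⟩

/-- Let `G` act on a tree `T` by graph automorphisms, without edge inversions, and
suppose the action is `k`-acylindrical: any element fixing pointwise a path of length
`k+1` is trivial.  If `K 1 ≤ K 2 ≤ …` is an ascending chain of elliptic subgroups
(each fixing some vertex), then there is a vertex fixed by all `K i` simultaneously. -/
theorem exists_common_fixed_vertex_of_elliptic_chain {V : Type*} {G : Type*} [Group G]
    [MulAction G V] (T : SimpleGraph V) (hT : T.IsTree)
    (hadj : ∀ (g : G) (u v : V), T.Adj u v → T.Adj (g • u) (g • v))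
    (hnoinv : ∀ (g : G) (u v : V), T.Adj u v → ¬(g • u = v ∧ g • v = u))
    (k : ℕ)
    (hacyl : ∀ (g : G) (u v : V) (p : T.Walk u v), p.IsPath → p.length = k + 1 →
      (∀ x ∈ p.support, g • x = x) → g = 1)
    (K : ℕ → Subgroup G) (hmono : Monotone K)
    (hell : ∀ i, ∃ v : V, ∀ g ∈ K i, g • v = v) :
    ∃ v : V, ∀ i, ∀ g ∈ K i, g • v = v :=
  exists_common_fixed_vertex_of_elliptic_chain_general T hT hadj k hacyl K hmono hell
end

section
/- Let ν, ℓ be constants and let (G,𝔓) be relatively hyperbolic with generating set X. There exists α = α(ν, ℓ, G, 𝔓, X) such that: if s is a ν-taut path of length ℓ in the relative Cayley graph whose endpoints both lie in a peripheral coset gP (P ∈ 𝔓), then M(s) − α ≤ |s|_X ≤ len_X(s) ≤ M(s) + α, where M(s) is the maximal X-length of an edge of s with both endpoints in gP (and M(s) = 0 if no such edge exists), |s|_X is the X-distance between the endpoints of s, and len_X(s) is the sum of the X-distances between consecutive vertices of s. -/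
section RelHyp

variable {G : Type*} [Group G] {ι : Type*}

/-- The `a`-th vertex of a path given by its list of vertices (junk value `1`). -/
def vtx (p : List G) (a : ℕ) : G := p.getD a 1

/-- A path in the relative Cayley graph `Cay(G, X ∪ 𝒫)`: a nonempty list of vertices in
which consecutive vertices differ by a generator from `X` or from some peripheral
subgroup `P i`. -/
def IsRelPath (X : Set G) (P : ι → Subgroup G) (p : List G) : Prop :=
  p ≠ [] ∧ List.Chain' (fun u v => u ≠ v ∧ (u⁻¹ * v ∈ X ∨ ∃ i, u⁻¹ * v ∈ P i)) p

/-- The `j`-th edge of `p` is a `P i`-edge (its label lies in `P i`). -/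
def IsPEdge (P : ι → Subgroup G) (p : List G) (i : ι) (j : ℕ) : Prop :=
  j + 1 < p.length ∧ (vtx p j)⁻¹ * vtx p (j + 1) ∈ P i

/-- Vertices `j` and `j'` of `p` lie in the same left coset of `P i`. -/
def SameCoset (P : ι → Subgroup G) (p : List G) (i : ι) (j j' : ℕ) : Prop :=
  (vtx p j)⁻¹ * vtx p j' ∈ P i

/-- `p` is non-backtracking: all of its peripheral components are isolated, i.e. any two
`P i`-edges lying in the same coset of `P i` belong to the same (contiguous) component. -/
def NonBacktracking (P : ι → Subgroup G) (p : List G) : Prop :=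
  ∀ i j j', j < j' → IsPEdge P p i j → IsPEdge P p i j' → SameCoset P p i j j' →
    ∀ m, j ≤ m → m ≤ j' → IsPEdge P p i m

/-- The edges `j ≤ m ≤ j'` form a maximal `P i`-component of `p`. -/
def IsComponent (P : ι → Subgroup G) (p : List G) (i : ι) (j j' : ℕ) : Prop :=
  j ≤ j' ∧ (∀ m, j ≤ m → m ≤ j' → IsPEdge P p i m) ∧
    ¬IsPEdge P p i (j' + 1) ∧ (j = 0 ∨ ¬IsPEdge P p i (j - 1))

/-- The word metric on `G` associated to a (not necessarily finite) generating set `S`. -/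
noncomputable def wdist (S : Set G) (u v : G) : ℕ :=
  sInf {n | ∃ l : List G, l.length = n ∧ (∀ x ∈ l, x ∈ S) ∧ l.prod = u⁻¹ * v}

/-- The generating set `X ∪ ⋃ i, P i` of the relative Cayley graph. -/
def relGen (X : Set G) (P : ι → Subgroup G) : Set G := X ∪ ⋃ i, (P i : Set G)

/-- `p` is a `λ`-quasi-geodesic in the relative Cayley graph. -/
def IsQG (X : Set G) (P : ι → Subgroup G) (lam : ℝ) (p : List G) : Prop :=
  ∀ a b : ℕ, a ≤ b → b < p.length →
    (b - a : ℝ) ≤ lam * (wdist (relGen X P) (vtx p a) (vtx p b) : ℝ) + lam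

/-- The bounded coset penetration property for the pair `(G, 𝔓)` with respect to `X`. -/
def BCP (X : Set G) (P : ι → Subgroup G) : Prop :=
  ∀ lam : ℝ, 1 ≤ lam → ∃ ε : ℕ, ∀ p q : List G,
    IsRelPath X P p → IsRelPath X P q → NonBacktracking P p → NonBacktracking P q →
    IsQG X P lam p → IsQG X P lam q →
    vtx p 0 = vtx q 0 → vtx p (p.length - 1) = vtx q (q.length - 1) →
    ∀ i j j', IsComponent P p i j j' →
      ((¬∃ m m', IsComponent P q i m m' ∧ (vtx p j)⁻¹ * vtx q m ∈ P i) →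
        wdist X (vtx p j) (vtx p (j' + 1)) < ε) ∧
      (∀ m m', IsComponent P q i m m' → (vtx p j)⁻¹ * vtx q m ∈ P i →
        wdist X (vtx p j) (vtx q m) < ε ∧
          wdist X (vtx p (j' + 1)) (vtx q (m' + 1)) < ε)

/-- The Gromov product on `(G, wdist S)`. -/
noncomputable def gromovProd (S : Set G) (w x y : G) : ℝ :=
  ((wdist S w x : ℤ) + (wdist S w y : ℤ) - (wdist S x y : ℤ) : ℤ) / 2

/-- Gromov hyperbolicity of the relative Cayley graph via the four-point condition. -/
def Hyp4 (S : Set G) : Prop :=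
  ∃ δ : ℝ, ∀ w x y z : G,
    min (gromovProd S w x y) (gromovProd S w y z) - δ ≤ gromovProd S w x z

/-- `(G, 𝔓)` is relatively hyperbolic with respect to the finite symmetric generating
set `X`: the relative Cayley graph is hyperbolic and the BCP property holds. -/
def RelHypPair (X : Set G) (P : ι → Subgroup G) : Prop :=
  X.Finite ∧ (∀ x ∈ X, x⁻¹ ∈ X) ∧ Subgroup.closure X = ⊤ ∧
    Hyp4 (relGen X P) ∧ BCP X P

end RelHyp

section Stmt13

variable {G : Type*} [Group G] {ι : Type*}

/-- `p` is `ν`-taut: any two connected peripheral edges (two `P i`-edges in the same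
coset of `P i`) satisfy `min (|e|_X, |e'|_X) < ν`. -/
def Taut (X : Set G) (P : ι → Subgroup G) (ν : ℕ) (p : List G) : Prop :=
  ∀ i j j', j < j' → IsPEdge P p i j → IsPEdge P p i j' → SameCoset P p i j j' →
    min (wdist X (vtx p j) (vtx p (j + 1))) (wdist X (vtx p j') (vtx p (j' + 1))) < ν

/-- `M p g i`: the maximal `X`-length of an edge of `p` with both endpoints in the coset
`g • P i` (and `0` if there is no such edge). -/
noncomputable def maxPeriphEdge (X : Set G) (P : ι → Subgroup G) (p : List G)
    (g : G) (i : ι) : ℕ :=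
  sSup {m | ∃ j, j + 1 < p.length ∧ g⁻¹ * vtx p j ∈ P i ∧ g⁻¹ * vtx p (j + 1) ∈ P i ∧
    wdist X (vtx p j) (vtx p (j + 1)) = m}

/-- The `X`-length of a path: the sum of the `X`-distances between consecutive
vertices. -/
noncomputable def lenX (X : Set G) (p : List G) : ℕ :=
  ∑ j ∈ Finset.range (p.length - 1), wdist X (vtx p j) (vtx p (j + 1))

end Stmt13

/-!
Induct on the length `n` of a taut segment whose endpoints lie in a peripheral coset `q`, proving
`len_X ≤ M + A(n)`. If the segment has an edge in `q`, tautness makes every other edge in `q`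
shorter than `ν`, and the induction hypothesis bounds the two sides of a longest one. Otherwise
the segment does not penetrate `q`: replace it by a non-backtracking path through some of its
vertices, by shortcutting backtracking pairs. Comparing this path with the single `q`-edge between
the endpoints, `BCP` shows that the endpoints are `X`-close; comparing again, every component of
the path has `X`-close endpoints. Each component or `X`-edge of the path, flanked by loops, spans a
proper subsegment, whose length the induction hypothesis bounds. Finally `M - α ≤ |s|_X` is the
triangle inequality `2 |e|_X ≤ |s|_X + len_X(s)` for a longest edge `e`.
-/

section WordMetric

variable {G : Type*} [Group G] {X : Set G}

theorem wdist_le_length {u v : G} {l : List G} (hl : ∀ x ∈ l, x ∈ X) (hp : l.prod = u⁻¹ * v) :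
    wdist X u v ≤ l.length :=
  Nat.sInf_le ⟨l, rfl, hl, hp⟩

theorem wdist_self (u : G) : wdist X u u = 0 :=
  Nat.le_zero.1 <| wdist_le_length (l := []) (by simp) (by simp)

theorem wdist_le_one {u v : G} (h : u⁻¹ * v ∈ X) : wdist X u v ≤ 1 :=
  wdist_le_length (l := [u⁻¹ * v]) (by simpa using h) (by simp)

theorem exists_list_prod_eq (hX : ∀ x ∈ X, x⁻¹ ∈ X) (hgen : Subgroup.closure X = ⊤) (g : G) :
    ∃ l : List G, (∀ x ∈ l, x ∈ X) ∧ l.prod = g := by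
  have hg : g ∈ Submonoid.closure (X ∪ X⁻¹) := by
    rw [← Subgroup.closure_toSubmonoid, hgen]
    trivial
  obtain ⟨l, hl, rfl⟩ := Submonoid.exists_list_of_mem_closure hg
  refine ⟨l, fun x hx => ?_, rfl⟩
  rcases hl x hx with h | h
  · exact h
  · simpa using hX _ h

theorem exists_list_length_eq_wdist (hX : ∀ x ∈ X, x⁻¹ ∈ X) (hgen : Subgroup.closure X = ⊤)
    (u v : G) :
    ∃ l : List G, l.length = wdist X u v ∧ (∀ x ∈ l, x ∈ X) ∧ l.prod = u⁻¹ * v := by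
  obtain ⟨l, hl, hp⟩ := exists_list_prod_eq hX hgen (u⁻¹ * v)
  have hne : {n | ∃ l : List G, l.length = n ∧ (∀ x ∈ l, x ∈ X) ∧ l.prod = u⁻¹ * v}.Nonempty :=
    ⟨l.length, l, rfl, hl, hp⟩
  exact Nat.sInf_mem hne

theorem wdist_triangle (hX : ∀ x ∈ X, x⁻¹ ∈ X) (hgen : Subgroup.closure X = ⊤) (u v w : G) :
    wdist X u w ≤ wdist X u v + wdist X v w := by
  obtain ⟨l₁, hlen₁, hl₁, hp₁⟩ := exists_list_length_eq_wdist hX hgen u v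
  obtain ⟨l₂, hlen₂, hl₂, hp₂⟩ := exists_list_length_eq_wdist hX hgen v w
  calc wdist X u w ≤ (l₁ ++ l₂).length :=
        wdist_le_length (by simpa [or_imp, forall_and] using ⟨hl₁, hl₂⟩)
          (by simp [hp₁, hp₂, mul_assoc])
    _ = wdist X u v + wdist X v w := by simp [hlen₁, hlen₂]

theorem wdist_comm (hX : ∀ x ∈ X, x⁻¹ ∈ X) (hgen : Subgroup.closure X = ⊤) (u v : G) :
    wdist X u v = wdist X v u := by
  suffices h : ∀ u v : G, wdist X u v ≤ wdist X v u from (h u v).antisymm (h v u)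
  intro u v
  obtain ⟨l, hlen, hl, hp⟩ := exists_list_length_eq_wdist hX hgen v u
  calc wdist X u v ≤ (l.map (·⁻¹)).reverse.length :=
        wdist_le_length (by simpa using fun x hx => by simpa using hX _ (hl _ hx))
          (by rw [← List.prod_inv_reverse, hp]; group)
    _ = wdist X v u := by simp [hlen]

end WordMetric

section Segment

variable {G : Type*} [Group G] {ι : Type*} (X : Set G) (P : ι → Subgroup G)

def IsRelPathOn (f : ℕ → G) (a c : ℕ) : Prop :=
  ∀ j, a ≤ j → j < c →
    f j ≠ f (j + 1) ∧ ((f j)⁻¹ * f (j + 1) ∈ X ∨ ∃ i, (f j : G ⧸ P i) = f (j + 1))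

def IsTautOn (ν : ℕ) (f : ℕ → G) (a c : ℕ) : Prop :=
  ∀ i j j', a ≤ j → j < j' → j' < c → (f j : G ⧸ P i) = f (j + 1) →
    (f j' : G ⧸ P i) = f (j' + 1) → (f j : G ⧸ P i) = f j' →
    min (wdist X (f j) (f (j + 1))) (wdist X (f j') (f (j' + 1))) < ν

def IsCosetEdge (f : ℕ → G) (i : ι) (q : G ⧸ P i) (j : ℕ) : Prop :=
  (f j : G ⧸ P i) = q ∧ (f (j + 1) : G ⧸ P i) = q

noncomputable def lenXOn (f : ℕ → G) (a c : ℕ) : ℕ :=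
  ∑ j ∈ Finset.Ico a c, wdist X (f j) (f (j + 1))

variable {X P} {f : ℕ → G} {a c : ℕ}

theorem IsRelPathOn.mono (h : IsRelPathOn X P f a c) {a' c' : ℕ} (ha : a ≤ a') (hc : c' ≤ c) :
    IsRelPathOn X P f a' c' :=
  fun j hj hj' => h j (ha.trans hj) (hj'.trans_le hc)

theorem IsTautOn.mono {ν : ℕ} (h : IsTautOn X P ν f a c) {a' c' : ℕ} (ha : a ≤ a')
    (hc : c' ≤ c) : IsTautOn X P ν f a' c' :=
  fun i j j' hj hjj' hj' => h i j j' (ha.trans hj) hjj' (hj'.trans_le hc)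

theorem IsTautOn.wdist_lt_of_isCosetEdge {ν : ℕ} (h : IsTautOn X P ν f a c) {i : ι}
    {q : G ⧸ P i} {j j₀ : ℕ} (hj : a ≤ j) (hjc : j < c) (hj₀ : a ≤ j₀) (hj₀c : j₀ < c)
    (hne : j ≠ j₀) (hej : IsCosetEdge P f i q j) (he₀ : IsCosetEdge P f i q j₀)
    (hle : wdist X (f j) (f (j + 1)) ≤ wdist X (f j₀) (f (j₀ + 1))) :
    wdist X (f j) (f (j + 1)) < ν := by
  obtain ⟨hj₁, hj₂⟩ := hej
  obtain ⟨h₀₁, h₀₂⟩ := he₀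
  rcases hne.lt_or_gt with hlt | hlt
  · have := h i j j₀ hj hlt hj₀c (hj₁.trans hj₂.symm) (h₀₁.trans h₀₂.symm) (hj₁.trans h₀₁.symm)
    omega
  · have := h i j₀ j hj₀ hlt hjc (h₀₁.trans h₀₂.symm) (hj₁.trans hj₂.symm) (h₀₁.trans hj₁.symm)
    omega

theorem exists_isCosetEdge_max {i : ι} {q : G ⧸ P i}
    (h : ∃ j, a ≤ j ∧ j < c ∧ IsCosetEdge P f i q j) :
    ∃ j₀, a ≤ j₀ ∧ j₀ < c ∧ IsCosetEdge P f i q j₀ ∧ ∀ j, a ≤ j → j < c →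
      IsCosetEdge P f i q j → wdist X (f j) (f (j + 1)) ≤ wdist X (f j₀) (f (j₀ + 1)) := by
  classical
  obtain ⟨j, hj, hjc, he⟩ := h
  obtain ⟨j₀, hj₀, hmax⟩ := ((Finset.Ico a c).filter (IsCosetEdge P f i q)).exists_max_image
    (fun j => wdist X (f j) (f (j + 1))) ⟨j, by simp [hj, hjc, he]⟩
  simp only [Finset.mem_filter, Finset.mem_Ico] at hj₀ hmax
  exact ⟨j₀, hj₀.1.1, hj₀.1.2, hj₀.2, fun j hj hjc he => hmax j ⟨⟨hj, hjc⟩, he⟩⟩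

theorem lenXOn_add_lenXOn {b : ℕ} (hab : a ≤ b) (hbc : b ≤ c) :
    lenXOn X f a b + lenXOn X f b c = lenXOn X f a c :=
  Finset.sum_Ico_consecutive _ hab hbc

theorem lenXOn_mono {a' c' : ℕ} (ha : a' ≤ a) (hc : c ≤ c') :
    lenXOn X f a c ≤ lenXOn X f a' c' :=
  Finset.sum_le_sum_of_subset (Finset.Ico_subset_Ico ha hc)

theorem lenXOn_succ (j : ℕ) : lenXOn X f j (j + 1) = wdist X (f j) (f (j + 1)) := by
  simp [lenXOn]

theorem lenXOn_add_wdist_add_lenXOn {j : ℕ} (hj : a ≤ j) (hjc : j < c) :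
    lenXOn X f a j + wdist X (f j) (f (j + 1)) + lenXOn X f (j + 1) c = lenXOn X f a c := by
  rw [← lenXOn_succ, lenXOn_add_lenXOn hj (by omega), lenXOn_add_lenXOn (by omega) hjc]

theorem wdist_le_lenXOn (hX : ∀ x ∈ X, x⁻¹ ∈ X) (hgen : Subgroup.closure X = ⊤)
    (hac : a ≤ c) : wdist X (f a) (f c) ≤ lenXOn X f a c := by
  induction c, hac using Nat.le_induction with
  | base => simp [wdist_self]
  | succ c hac ih =>
    calc wdist X (f a) (f (c + 1)) ≤ wdist X (f a) (f c) + wdist X (f c) (f (c + 1)) :=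
          wdist_triangle hX hgen _ _ _
      _ ≤ lenXOn X f a c + lenXOn X f c (c + 1) := by rw [lenXOn_succ]; omega
      _ = lenXOn X f a (c + 1) := lenXOn_add_lenXOn hac c.le_succ

theorem two_mul_wdist_le_wdist_add_lenXOn (hX : ∀ x ∈ X, x⁻¹ ∈ X)
    (hgen : Subgroup.closure X = ⊤) {j : ℕ} (hj : a ≤ j) (hjc : j < c) :
    2 * wdist X (f j) (f (j + 1)) ≤ wdist X (f a) (f c) + lenXOn X f a c := by
  have h₁ := wdist_triangle hX hgen (f j) (f a) (f (j + 1))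
  have h₂ := wdist_triangle hX hgen (f a) (f c) (f (j + 1))
  have h₃ := wdist_le_lenXOn (f := f) hX hgen hj
  have h₄ := wdist_le_lenXOn (f := f) hX hgen (show j + 1 ≤ c from hjc)
  have e₁ := wdist_comm hX hgen (f j) (f a)
  have e₂ := wdist_comm hX hgen (f c) (f (j + 1))
  have := lenXOn_add_wdist_add_lenXOn (X := X) (f := f) hj hjc
  omega

theorem eq_of_forall_eq_succ {α : Type*} (φ : ℕ → α) (hac : a ≤ c)
    (h : ∀ j, a ≤ j → j < c → φ j = φ (j + 1)) : φ a = φ c := by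
  induction c, hac using Nat.le_induction with
  | base => rfl
  | succ c hac ih => exact (ih fun j hj hjc => h j hj (by omega)).trans (h c hac (by omega))

theorem sum_Ico_le_mul_of_jumps {w b : ℕ → ℕ} {r C : ℕ}
    (hb : ∀ t t', t ≤ t' → t' ≤ r → b t ≤ b t')
    (hjump : ∀ t < r, ∃ t', t < t' ∧ t' ≤ r ∧ ∑ j ∈ Finset.Ico (b t) (b t'), w j ≤ C) :
    ∑ j ∈ Finset.Ico (b 0) (b r), w j ≤ r * C := by
  suffices h : ∀ m t, r - t = m → t ≤ r → ∑ j ∈ Finset.Ico (b t) (b r), w j ≤ m * C from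
    h r 0 (Nat.sub_zero r) (Nat.zero_le r)
  intro m
  induction m using Nat.strong_induction_on with
  | _ m ih =>
  intro t hm htr
  rcases htr.eq_or_lt with rfl | htr
  · simp
  obtain ⟨t', htt', ht'r, hC⟩ := hjump t htr
  rw [← Finset.sum_Ico_consecutive _ (hb t t' htt'.le ht'r) (hb t' r ht'r le_rfl)]
  calc _ ≤ C + (r - t') * C := add_le_add hC (ih (r - t') (by omega) t' rfl ht'r)
    _ = (r - t' + 1) * C := by ring
    _ ≤ m * C := Nat.mul_le_mul_right C (by omega)

end Segment

section PathList

def pathList {G : Type*} (u : ℕ → G) (r : ℕ) : List G := List.ofFn fun t : Fin (r + 1) => u t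

@[simp] theorem length_pathList {G : Type*} (u : ℕ → G) (r : ℕ) :
    (pathList u r).length = r + 1 := by
  simp [pathList]

variable {G : Type*} [Group G] {ι : Type*} {X : Set G} {P : ι → Subgroup G} {u : ℕ → G} {r : ℕ}

theorem vtx_pathList {t : ℕ} (h : t ≤ r) : vtx (pathList u r) t = u t := by
  rw [vtx, List.getD_eq_getElem _ _ (by simp; omega)]
  simp only [pathList, List.getElem_ofFn]

theorem vtx_pathList_last : vtx (pathList u r) ((pathList u r).length - 1) = u r := by
  simpa using vtx_pathList (u := u) (le_refl r)

theorem isPEdge_pathList {i : ι} {j : ℕ} :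
    IsPEdge P (pathList u r) i j ↔ j < r ∧ (u j : G ⧸ P i) = u (j + 1) := by
  rw [IsPEdge, length_pathList, QuotientGroup.eq]
  constructor
  · rintro ⟨h, hP⟩
    rw [vtx_pathList (by omega), vtx_pathList (by omega)] at hP
    exact ⟨by omega, hP⟩
  · rintro ⟨h, hP⟩
    rw [vtx_pathList (by omega), vtx_pathList (by omega)]
    exact ⟨by omega, hP⟩

theorem isRelPath_pathList (h : IsRelPathOn X P u 0 r) : IsRelPath X P (pathList u r) := by
  refine ⟨List.ne_nil_of_length_pos (by simp), List.isChain_iff_getElem.2 fun t ht => ?_⟩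
  simp only [length_pathList] at ht
  simp only [pathList, List.getElem_ofFn, ← QuotientGroup.eq]
  exact h t (Nat.zero_le t) (by omega)

end PathList

section Components

variable {G : Type*} [Group G] {ι : Type*} {X : Set G} {P : ι → Subgroup G}

theorem IsComponent.succ_lt_length {p : List G} {k : ι} {a c : ℕ}
    (h : IsComponent P p k a c) : c + 1 < p.length :=
  (h.2.1 c h.1 le_rfl).1

theorem exists_isComponent {p : List G} {k : ι} {t : ℕ} (ht : IsPEdge P p k t) :
    ∃ a c, a ≤ t ∧ t ≤ c ∧ IsComponent P p k a c := by
  classical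
  -- the run of `P k`-edges through `t` stops after `t + d` and before `t - e`
  have hright : ∃ d, ¬IsPEdge P p k (t + d + 1) := ⟨p.length, fun h => by have := h.1; omega⟩
  have hleft : ∃ e, e = t ∨ ¬IsPEdge P p k (t - e - 1) := ⟨t, Or.inl rfl⟩
  set d := Nat.find hright
  set e := Nat.find hleft
  have hd : ∀ d' < d, IsPEdge P p k (t + d' + 1) := fun d' h => not_not.1 (Nat.find_min hright h)
  have he : ∀ e' < e, IsPEdge P p k (t - e' - 1) := fun e' h =>
    not_not.1 ((not_or.1 (Nat.find_min hleft h)).2)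
  have het : e ≤ t := Nat.find_min' hleft (Or.inl rfl)
  refine ⟨t - e, t + d, by omega, by omega, by omega, fun m hm hm' => ?_, ?_, ?_⟩
  · rcases lt_trichotomy m t with hmt | rfl | hmt
    · simpa [show t - (t - m - 1) - 1 = m by omega] using he (t - m - 1) (by omega)
    · exact ht
    · simpa [show t + (m - t - 1) + 1 = m by omega] using hd (m - t - 1) (by omega)
  · exact Nat.find_spec hright
  · rcases Nat.find_spec hleft with h | h
    · exact Or.inl (by omega)
    · exact Or.inr (by simpa [Nat.sub_sub] using h)

theorem nonBacktracking_of_length_le_two {p : List G} (h : p.length ≤ 2) :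
    NonBacktracking P p := by
  intro i j j' hjj' _ hj' _ m _ _
  have := hj'.1
  omega

theorem isRelPath_singleton (v : G) : IsRelPath X P [v] :=
  ⟨List.cons_ne_nil _ _, List.isChain_singleton _⟩

theorem isRelPath_pair {v w : G} (hvw : v ≠ w) (h : v⁻¹ * w ∈ X ∨ ∃ i, v⁻¹ * w ∈ P i) :
    IsRelPath X P [v, w] :=
  ⟨List.cons_ne_nil _ _, List.isChain_pair.2 ⟨hvw, h⟩⟩

theorem isComponent_pair {v w : G} {i : ι} (h : v⁻¹ * w ∈ P i) :
    IsComponent P [v, w] i 0 0 := by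
  refine ⟨le_rfl, fun m _ hm => ?_, fun h => by simpa [IsPEdge] using h.1, Or.inl rfl⟩
  obtain rfl : m = 0 := by omega
  exact ⟨by simp, h⟩

theorem isQG_of_length_le {p : List G} {lam : ℝ} (hlam : 0 ≤ lam)
    (h : (p.length : ℝ) ≤ lam + 1) : IsQG X P lam p := by
  intro a b hab hb
  have hb' : (b : ℝ) + 1 ≤ p.length := by exact_mod_cast hb
  have : (0 : ℝ) ≤ lam * wdist (relGen X P) (vtx p a) (vtx p b) := by positivity
  have : (0 : ℝ) ≤ a := a.cast_nonneg
  linarith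

end Components

section BCPConsequences

variable {G : Type*} [Group G] {ι : Type*} {X : Set G} {P : ι → Subgroup G}

def ComponentSpanBound (X : Set G) (P : ι → Subgroup G) (L ε : ℕ) : Prop :=
  ∀ p : List G, IsRelPath X P p → NonBacktracking P p → p.length ≤ L + 1 →
    (∃ i, (vtx p 0)⁻¹ * vtx p (p.length - 1) ∈ P i) → ∀ k a c, IsComponent P p k a c →
    wdist X (vtx p a) (vtx p (c + 1)) ≤ 2 * ε + wdist X (vtx p 0) (vtx p (p.length - 1))

/-- Short paths are quasi-geodesics with a large enough constant, so `BCP` applies to them. -/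
theorem BCP.exists_of_length_le (h : BCP X P) (L : ℕ) :
    ∃ ε : ℕ, ∀ p q : List G, IsRelPath X P p → IsRelPath X P q → NonBacktracking P p →
      NonBacktracking P q → p.length ≤ L + 1 → q.length ≤ L + 1 →
      vtx p 0 = vtx q 0 → vtx p (p.length - 1) = vtx q (q.length - 1) →
      ∀ i j j', IsComponent P p i j j' →
        ((¬∃ m m', IsComponent P q i m m' ∧ (vtx p j)⁻¹ * vtx q m ∈ P i) →
          wdist X (vtx p j) (vtx p (j' + 1)) < ε) ∧
        (∀ m m', IsComponent P q i m m' → (vtx p j)⁻¹ * vtx q m ∈ P i →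
          wdist X (vtx p j) (vtx q m) < ε ∧ wdist X (vtx p (j' + 1)) (vtx q (m' + 1)) < ε) := by
  obtain ⟨ε, hε⟩ := h (L + 1) (by linarith [L.cast_nonneg (α := ℝ)])
  have hqg : ∀ p : List G, p.length ≤ L + 1 → IsQG X P ((L : ℝ) + 1) p := fun p hp =>
    isQG_of_length_le (by positivity) (by exact_mod_cast Nat.le_succ_of_le hp)
  exact ⟨ε, fun p q hp hq hpnb hqnb hpL hqL => hε p q hp hq hpnb hqnb (hqg p hpL) (hqg q hqL)⟩

theorem BCP.exists_componentSpanBound (h : BCP X P) (hX : ∀ x ∈ X, x⁻¹ ∈ X)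
    (hgen : Subgroup.closure X = ⊤) (L : ℕ) : ∃ ε, ComponentSpanBound X P L ε := by
  obtain ⟨ε, hε⟩ := h.exists_of_length_le L
  refine ⟨ε, fun p hp hpnb hpL ⟨i, hi⟩ k a c hcomp => ?_⟩
  set v := vtx p 0
  set w := vtx p (p.length - 1)
  by_cases hvw : v = w
  · have := (hε p [v] hp (isRelPath_singleton v) hpnb (nonBacktracking_of_length_le_two (by simp))
      hpL (by simp) rfl hvw.symm k a c hcomp).1
      fun ⟨m, m', hm, _⟩ => by simpa using hm.succ_lt_length
    omega
  have hp2 : 2 ≤ p.length := by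
    by_contra hlt
    exact hvw (by simp only [v, w, show p.length - 1 = 0 by omega])
  have hspan := hε p [v, w] hp (isRelPath_pair hvw (Or.inr ⟨i, hi⟩)) hpnb
    (nonBacktracking_of_length_le_two le_rfl) hpL (by simp; omega) rfl rfl k a c hcomp
  by_cases hmatch : ∃ m m', IsComponent P [v, w] k m m' ∧ (vtx p a)⁻¹ * vtx [v, w] m ∈ P k
  · obtain ⟨m, m', hm, hmem⟩ := hmatch
    obtain ⟨rfl, rfl⟩ : m = 0 ∧ m' = 0 := by
      have := hm.succ_lt_length
      have := hm.1
      simp only [List.length_cons, List.length_nil] at *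
      omega
    obtain ⟨hv, hw⟩ := hspan.2 0 0 hm hmem
    have h₁ := wdist_triangle hX hgen (vtx p a) v (vtx p (c + 1))
    have h₂ := wdist_triangle hX hgen v w (vtx p (c + 1))
    have h₃ := wdist_comm hX hgen w (vtx p (c + 1))
    change wdist X (vtx p (c + 1)) w < ε at hw
    change wdist X (vtx p a) v < ε at hv
    omega
  · have := hspan.1 hmatch
    omega

theorem BCP.exists_wdist_lt_of_not_penetrate (h : BCP X P) (L : ℕ) :
    ∃ ε : ℕ, ∀ p : List G, IsRelPath X P p → NonBacktracking P p → p.length ≤ L + 1 → ∀ i,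
      vtx p 0 ≠ vtx p (p.length - 1) → (vtx p 0)⁻¹ * vtx p (p.length - 1) ∈ P i →
      (∀ j, IsPEdge P p i j → (vtx p 0)⁻¹ * vtx p j ∉ P i) →
      wdist X (vtx p 0) (vtx p (p.length - 1)) < ε := by
  obtain ⟨ε, hε⟩ := h.exists_of_length_le L
  refine ⟨ε, fun p hp hpnb hpL i hvw hi hno => ?_⟩
  have hp2 : 2 ≤ p.length := by
    by_contra hlt
    exact hvw (by rw [show p.length - 1 = 0 by omega])
  exact (hε [vtx p 0, vtx p (p.length - 1)] p (isRelPath_pair hvw (Or.inr ⟨i, hi⟩)) hp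
    (nonBacktracking_of_length_le_two le_rfl) hpnb (by simp; omega) hpL rfl rfl i 0 0
    (isComponent_pair hi)).1 fun ⟨m, _, hm, hmem⟩ => hno m (hm.2.1 m le_rfl hm.1) hmem

end BCPConsequences

section Reduction

variable {G : Type*} [Group G] {ι : Type*} {X : Set G} {P : ι → Subgroup G}

def NonBacktrackingFn (P : ι → Subgroup G) (u : ℕ → G) (r : ℕ) : Prop :=
  ∀ i j j', j < j' → j' < r → (u j : G ⧸ P i) = u (j + 1) → (u j' : G ⧸ P i) = u (j' + 1) →
    (u j : G ⧸ P i) = u j' → ∀ k, j ≤ k → k ≤ j' → (u k : G ⧸ P i) = u (k + 1)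

theorem nonBacktracking_pathList {u : ℕ → G} {r : ℕ} (h : NonBacktrackingFn P u r) :
    NonBacktracking P (pathList u r) := by
  intro i j j' hjj' hj hj' hcos k hjk hkj'
  rw [isPEdge_pathList] at hj hj' ⊢
  rw [SameCoset, ← QuotientGroup.eq, vtx_pathList (by omega), vtx_pathList (by omega)] at hcos
  exact ⟨by omega, h i j j' hjj' hj'.1 hj.2 hj'.2 hcos k hjk hkj'⟩

/-- The step `f p → f q` of a reduction of the segment `[a, c]` of `f`: up to the loops `f[p, a']`
and `f[c', q]`, it is an edge of `f` or a peripheral shortcut of a proper subsegment. -/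
def IsReducedEdge (P : ι → Subgroup G) (f : ℕ → G) (a c p q : ℕ) : Prop :=
  f p ≠ f q ∧ ∃ a' c', p ≤ a' ∧ a' < c' ∧ c' ≤ q ∧ f a' = f p ∧ f c' = f q ∧
    (c' = a' + 1 ∨ (∃ i, (f a' : G ⧸ P i) = f c') ∧ (a < a' ∨ c' < c))

/-- The path `t ↦ f (b t)`, `t ≤ r`, is obtained from the segment `[a, c]` of `f` by cutting out
loops and shortcutting subsegments with endpoints in a common peripheral coset. -/
structure IsReduction (P : ι → Subgroup G) (f : ℕ → G) (a c : ℕ) (b : ℕ → ℕ) (r : ℕ) :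
    Prop where
  map_zero : b 0 = a
  map_length : b r = c
  isReducedEdge : ∀ t < r, IsReducedEdge P f a c (b t) (b (t + 1))

variable {f : ℕ → G} {a c : ℕ}

theorem IsReducedEdge.lt {p q : ℕ} (h : IsReducedEdge P f a c p q) : p < q := by
  obtain ⟨-, a', c', h₁, h₂, h₃, -⟩ := h
  omega

theorem IsReducedEdge.of_eq_left {p p' q : ℕ} (h : IsReducedEdge P f a c p q) (hp : p' ≤ p)
    (hf : f p' = f p) : IsReducedEdge P f a c p' q := by
  obtain ⟨hne, a', c', h₁, h₂, h₃, h₄, h₅, h₆⟩ := h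
  exact ⟨hf ▸ hne, a', c', hp.trans h₁, h₂, h₃, h₄.trans hf.symm, h₅, h₆⟩

theorem IsReducedEdge.exists_proper {p p' : ℕ} (he : IsReducedEdge P f a c p p') (hap : a ≤ p)
    (hp'c : p' ≤ c) {i : ι} {q : G ⧸ P i} (hp : (f p : G ⧸ P i) = q)
    (hp' : (f p' : G ⧸ P i) = q) (hno : ∀ j, a ≤ j → j < c → ¬IsCosetEdge P f i q j) :
    ∃ a' c', p ≤ a' ∧ a' < c' ∧ c' ≤ p' ∧ f a' = f p ∧ f c' = f p' ∧ (a < a' ∨ c' < c) := by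
  obtain ⟨-, a', c', h₁, h₂, h₃, h₄, h₅, hsc⟩ := he
  refine ⟨a', c', h₁, h₂, h₃, h₄, h₅, hsc.elim (fun h => ?_) And.right⟩
  subst h
  exact absurd ⟨h₄ ▸ hp, h₅ ▸ hp'⟩ (hno a' (by omega) (by omega))

theorem IsReducedEdge.exists_wdist_le_one {p p' : ℕ} (he : IsReducedEdge P f a c p p')
    (hap : a ≤ p) (hp'c : p' ≤ c) (hf : IsRelPathOn X P f a c)
    (hP : ∀ k, (f p : G ⧸ P k) ≠ f p') :
    ∃ a', p ≤ a' ∧ a' + 1 ≤ p' ∧ f a' = f p ∧ f (a' + 1) = f p' ∧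
      wdist X (f a') (f (a' + 1)) ≤ 1 := by
  obtain ⟨-, a', c', h₁, h₂, h₃, h₄, h₅, hsc⟩ := he
  have hc' : c' = a' + 1 := hsc.resolve_right fun ⟨⟨k, hk⟩, _⟩ => hP k (by rwa [h₄, h₅] at hk)
  subst hc'
  refine ⟨a', h₁, h₃, h₄, h₅, ?_⟩
  rcases (hf a' (by omega) (by omega)).2 with hx | ⟨k, hk⟩
  · exact wdist_le_one hx
  · exact absurd (by rwa [h₄, h₅] at hk) (hP k)

namespace IsReduction

variable {b : ℕ → ℕ} {r : ℕ}

theorem lt_of_lt (hb : IsReduction P f a c b r) {t t' : ℕ} (h : t < t') (h' : t' ≤ r) :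
    b t < b t' := by
  induction t', h using Nat.le_induction with
  | base => exact (hb.isReducedEdge t (by omega)).lt
  | succ t' ht ih => exact (ih (by omega)).trans (hb.isReducedEdge t' (by omega)).lt

theorem le_of_le (hb : IsReduction P f a c b r) {t t' : ℕ} (h : t ≤ t') (h' : t' ≤ r) :
    b t ≤ b t' := by
  rcases h.eq_or_lt with rfl | h
  exacts [le_rfl, (hb.lt_of_lt h h').le]

theorem le_map (hb : IsReduction P f a c b r) {t : ℕ} (ht : t ≤ r) : a ≤ b t :=
  hb.map_zero ▸ hb.le_of_le (Nat.zero_le t) ht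

theorem map_le (hb : IsReduction P f a c b r) {t : ℕ} (ht : t ≤ r) : b t ≤ c :=
  hb.map_length ▸ hb.le_of_le ht le_rfl

theorem add_le (hb : IsReduction P f a c b r) : a + r ≤ c := by
  have : ∀ t ≤ r, a + t ≤ b t := by
    intro t ht
    induction t with
    | zero => simp [hb.map_zero]
    | succ t ih =>
      have := hb.lt_of_lt (t := t) (t' := t + 1) (by omega) ht
      have := ih (by omega)
      omega
  simpa [hb.map_length] using this r le_rfl

theorem isRelPathOn (hb : IsReduction P f a c b r) (hf : IsRelPathOn X P f a c) :
    IsRelPathOn X P (fun t => f (b t)) 0 r := by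
  intro t _ ht
  obtain ⟨hne, a', c', h₁, h₂, h₃, h₄, h₅, h₆⟩ := hb.isReducedEdge t ht
  refine ⟨hne, ?_⟩
  show (f (b t))⁻¹ * f (b (t + 1)) ∈ X ∨ ∃ i, (f (b t) : G ⧸ P i) = f (b (t + 1))
  rw [← h₄, ← h₅]
  rcases h₆ with rfl | ⟨hP, -⟩
  · have := hb.le_map ht.le
    have := hb.map_le (t := t + 1) ht
    exact (hf a' (by omega) (by omega)).2
  · exact Or.inr hP

theorem refl (hf : IsRelPathOn X P f a c) (hac : a ≤ c) :
    IsReduction P f a c (a + ·) (c - a) where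
  map_zero := rfl
  map_length := Nat.add_sub_cancel' hac
  isReducedEdge t ht :=
    ⟨(hf (a + t) (by omega) (by omega)).1, a + t, a + t + 1, le_rfl, by omega, le_rfl, rfl, rfl,
      Or.inl rfl⟩

theorem skip (hb : IsReduction P f a c b r) {j d : ℕ} (hjd : j + d < r)
    (hj : IsReducedEdge P f a c (b j) (b (j + 1 + d))) :
    IsReduction P f a c (fun t => if t ≤ j then b t else b (t + d)) (r - d) where
  map_zero := by simp [hb.map_zero]
  map_length := by rw [if_neg (by omega), Nat.sub_add_cancel (by omega), hb.map_length]
  isReducedEdge t ht := by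
    rcases lt_trichotomy t j with h | rfl | h
    · simpa [h.le, show t + 1 ≤ j by omega] using hb.isReducedEdge t (by omega)
    · simpa using hj
    · simpa [show ¬t ≤ j by omega, show ¬t + 1 ≤ j by omega, Nat.add_right_comm t 1 d] using
        hb.isReducedEdge (t + d) (by omega)

end IsReduction

/-- A backtracking pair of `P i`-edges `j < j'` in a common coset is removed by shortcutting the
vertices strictly between `j` and `j'` (or cutting out the loop, if `f (b j) = f (b j')`); the edge
`j'` is kept, so the shortcut is never the whole segment. -/
theorem exists_isReduction_nonBacktrackingFn (hf : IsRelPathOn X P f a c) (hac : a ≤ c) :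
    ∃ b r, IsReduction P f a c b r ∧ NonBacktrackingFn P (fun t => f (b t)) r := by
  suffices h : ∀ r b, IsReduction P f a c b r →
      ∃ b r, IsReduction P f a c b r ∧ NonBacktrackingFn P (fun t => f (b t)) r from
    h _ _ (IsReduction.refl hf hac)
  intro r
  induction r using Nat.strong_induction_on with
  | _ r ih =>
  intro b hb
  by_cases hnb : NonBacktrackingFn P (fun t => f (b t)) r
  · exact ⟨b, r, hb, hnb⟩
  simp only [NonBacktrackingFn, not_forall] at hnb
  obtain ⟨i, j, j', hjj', hj'r, hej, hej', hcos, k, hjk, hkj', hek⟩ := hnb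
  have hjk : j < k := lt_of_le_of_ne hjk (by rintro rfl; exact hek hej)
  have hkj' : k < j' := lt_of_le_of_ne hkj' (by rintro rfl; exact hek hej')
  by_cases hloop : f (b j) = f (b j')
  · refine ih (r - (j' - j)) (by omega) _ (hb.skip (j := j) (d := j' - j) (by omega) ?_)
    rw [show j + 1 + (j' - j) = j' + 1 by omega]
    exact (hb.isReducedEdge j' hj'r).of_eq_left (hb.le_of_le hjj'.le hj'r.le) hloop
  · refine ih (r - (j' - j - 1)) (by omega) _ (hb.skip (j := j) (d := j' - j - 1) (by omega) ?_)
    rw [show j + 1 + (j' - j - 1) = j' by omega]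
    have hj'c : b j' < c := hb.map_length ▸ hb.lt_of_lt hj'r le_rfl
    exact ⟨hloop, b j, b j', le_rfl, hb.lt_of_lt hjj' hj'r.le, le_rfl, rfl, rfl,
      Or.inr ⟨⟨i, hcos⟩, Or.inr hj'c⟩⟩

end Reduction

section ReductionBCP

variable {G : Type*} [Group G] {ι : Type*} {X : Set G} {P : ι → Subgroup G}

theorem BCP.exists_wdist_lt_of_isReduction (hbcp : BCP X P) (L : ℕ) :
    ∃ ε : ℕ, ∀ (f : ℕ → G) (a c : ℕ) (b : ℕ → ℕ) (r : ℕ) (i : ι) (q : G ⧸ P i), c ≤ a + L →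
      IsRelPathOn X P f a c → IsReduction P f a c b r → NonBacktrackingFn P (fun t => f (b t)) r →
      f a ≠ f c → (f a : G ⧸ P i) = q → (f c : G ⧸ P i) = q →
      (∀ t < r, ¬IsCosetEdge P (fun t => f (b t)) i q t) → wdist X (f a) (f c) < ε := by
  obtain ⟨ε, hε⟩ := hbcp.exists_wdist_lt_of_not_penetrate (X := X) L
  refine ⟨ε, fun f a c b r i q hca hf hb hnb hfac ha hc hpen => ?_⟩
  have hlen := hb.add_le
  have hε' := hε (pathList (fun t => f (b t)) r) (isRelPath_pathList (hb.isRelPathOn hf))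
    (nonBacktracking_pathList hnb) (by simp; omega) i
  rw [vtx_pathList_last, vtx_pathList (Nat.zero_le r)] at hε'
  simp only [hb.map_zero, hb.map_length] at hε'
  refine hε' hfac (QuotientGroup.eq.1 (ha.trans hc.symm)) fun j hj hmem => ?_
  obtain ⟨hjr, hP⟩ := isPEdge_pathList.1 hj
  rw [vtx_pathList hjr.le, ← QuotientGroup.eq] at hmem
  exact hpen j hjr ⟨hmem.symm.trans ha, hP.symm.trans (hmem.symm.trans ha)⟩

theorem ComponentSpanBound.wdist_le {L ε : ℕ} (hε : ComponentSpanBound X P L ε) {f : ℕ → G}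
    {a c : ℕ} {b : ℕ → ℕ} {r : ℕ} (hf : IsRelPathOn X P f a c) (hb : IsReduction P f a c b r)
    (hnb : NonBacktrackingFn P (fun t => f (b t)) r) (hL : c ≤ a + L)
    (hends : ∃ i, (f a : G ⧸ P i) = f c) {k : ι} {a₀ c₀ : ℕ}
    (hcomp : IsComponent P (pathList (fun t => f (b t)) r) k a₀ c₀) :
    wdist X (f (b a₀)) (f (b (c₀ + 1))) ≤ 2 * ε + wdist X (f a) (f c) := by
  have hc₀ : c₀ + 1 ≤ r := by simpa using hcomp.succ_lt_length
  have := hcomp.1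
  have hlen := hb.add_le
  have := hε _ (isRelPath_pathList (hb.isRelPathOn hf)) (nonBacktracking_pathList hnb)
    (by simp; omega)
  rw [vtx_pathList_last, vtx_pathList (Nat.zero_le r)] at this
  simp only [hb.map_zero, hb.map_length, ← QuotientGroup.eq] at this
  have := this hends k a₀ c₀ hcomp
  rwa [vtx_pathList (t := a₀) (by omega), vtx_pathList hc₀] at this

theorem exists_wdist_le_of_not_penetrate (hX : ∀ x ∈ X, x⁻¹ ∈ X)
    (hgen : Subgroup.closure X = ⊤) (hbcp : BCP X P) (n : ℕ) :
    ∃ γ : ℕ, ∀ (f : ℕ → G) (a c : ℕ) (i : ι) (q : G ⧸ P i), a ≤ c → c ≤ a + n →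
      IsRelPathOn X P f a c → (f a : G ⧸ P i) = q → (f c : G ⧸ P i) = q →
      (∀ j, a ≤ j → j < c → ¬IsCosetEdge P f i q j) → wdist X (f a) (f c) ≤ γ := by
  induction n with
  | zero =>
    refine ⟨0, fun f a c i q hac hca _ _ _ _ => ?_⟩
    obtain rfl : c = a := by omega
    simp [wdist_self]
  | succ n ih =>
  obtain ⟨γ, hγ⟩ := ih
  obtain ⟨ε, hε⟩ := hbcp.exists_wdist_lt_of_isReduction (X := X) (n + 1)
  refine ⟨3 * γ + ε, fun f a c i q hac hca hf ha hc hno => ?_⟩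
  by_cases hfac : f a = f c
  · simp [hfac, wdist_self]
  obtain ⟨b, r, hb, hnb⟩ := exists_isReduction_nonBacktrackingFn hf hac
  by_cases hpen : ∃ t < r, IsCosetEdge P (fun t => f (b t)) i q t
  · -- split at a penetrating step of the reduction; the three pieces are proper subsegments
    obtain ⟨t, ht, hqt, hqt'⟩ := hpen
    have := hb.le_map ht.le
    have := hb.map_le (t := t + 1) ht
    obtain ⟨a', c', h₁, h₂, h₃, h₄, h₅, hproper⟩ :=
      (hb.isReducedEdge t ht).exists_proper (by omega) (by omega) hqt hqt' hno
    have ha' : (f a' : G ⧸ P i) = q := h₄ ▸ hqt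
    have hc' : (f c' : G ⧸ P i) = q := h₅ ▸ hqt'
    have hsub : ∀ a₁ c₁, a ≤ a₁ → a₁ ≤ c₁ → c₁ ≤ c → c₁ ≤ a₁ + n →
        (f a₁ : G ⧸ P i) = q → (f c₁ : G ⧸ P i) = q → wdist X (f a₁) (f c₁) ≤ γ :=
      fun a₁ c₁ h₁ h₂ h₃ h₄ h₅ h₆ => hγ f a₁ c₁ i q h₂ h₄ (hf.mono h₁ h₃) h₅ h₆
        fun j hj hj' => hno j (by omega) (by omega)
    have := hsub a a' le_rfl (by omega) (by omega) (by omega) ha ha'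
    have := hsub a' c' (by omega) h₂.le (by omega) (by omega) ha' hc'
    have := hsub c' c (by omega) (by omega) le_rfl (by omega) hc' hc
    have := wdist_triangle hX hgen (f a) (f a') (f c)
    have := wdist_triangle hX hgen (f a') (f c') (f c)
    omega
  · push Not at hpen
    have := hε f a c b r i q hca hf hb hnb hfac ha hc hpen
    omega

end ReductionBCP

section LengthBound

variable {G : Type*} [Group G] {ι : Type*} {X : Set G} {P : ι → Subgroup G}

/-- The induction statement; quantifying over all bounds `M` of the edges in `q` replaces their
maximum. -/
def LenBound (X : Set G) (P : ι → Subgroup G) (ν n A : ℕ) : Prop :=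
  ∀ (f : ℕ → G) (a c : ℕ) (i : ι) (q : G ⧸ P i), a ≤ c → c ≤ a + n →
    IsRelPathOn X P f a c → IsTautOn X P ν f a c → (f a : G ⧸ P i) = q → (f c : G ⧸ P i) = q →
    ∀ M, (∀ j, a ≤ j → j < c → IsCosetEdge P f i q j → wdist X (f j) (f (j + 1)) ≤ M) →
    lenXOn X f a c ≤ M + A

namespace LenBound

variable {ν n A : ℕ} {f : ℕ → G} {a c : ℕ}

theorem lenXOn_le_wdist_add (hA : LenBound X P ν n A) (hX : ∀ x ∈ X, x⁻¹ ∈ X)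
    (hgen : Subgroup.closure X = ⊤) (hac : a ≤ c) (hca : c ≤ a + n) (hf : IsRelPathOn X P f a c)
    (ht : IsTautOn X P ν f a c) {i : ι} (hcos : (f a : G ⧸ P i) = f c) :
    lenXOn X f a c ≤ wdist X (f a) (f c) + 2 * A := by
  by_cases hq : ∃ j, a ≤ j ∧ j < c ∧ IsCosetEdge P f i (f a : G ⧸ P i) j
  · obtain ⟨j₀, hj₀, hj₀c, -, hmax⟩ := exists_isCosetEdge_max (X := X) hq
    have h₁ := hA f a c i _ hac hca hf ht rfl hcos.symm _ hmax
    have h₂ := two_mul_wdist_le_wdist_add_lenXOn (f := f) hX hgen hj₀ hj₀c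
    omega
  · push Not at hq
    have := hA f a c i _ hac hca hf ht rfl hcos.symm 0 fun j hj hjc he => absurd he (hq j hj hjc)
    omega

theorem lenXOn_le_of_eq (hA : LenBound X P ν n A) (hX : ∀ x ∈ X, x⁻¹ ∈ X)
    (hgen : Subgroup.closure X = ⊤) (i : ι) (hac : a ≤ c) (hca : c ≤ a + n)
    (hf : IsRelPathOn X P f a c) (ht : IsTautOn X P ν f a c) (heq : f a = f c) :
    lenXOn X f a c ≤ 2 * A := by
  simpa [heq, wdist_self] using
    hA.lenXOn_le_wdist_add hX hgen hac hca hf ht (congrArg (QuotientGroup.mk (s := P i)) heq)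

theorem lenXOn_le_add_of_loops (hA : LenBound X P ν n A) (hX : ∀ x ∈ X, x⁻¹ ∈ X)
    (hgen : Subgroup.closure X = ⊤) (i : ι) {p p' a' c' : ℕ} (hap : a ≤ p) (hpa' : p ≤ a')
    (ha'c' : a' < c') (hc'p' : c' ≤ p') (hp'c : p' ≤ c) (hca : c ≤ a + (n + 1))
    (hf : IsRelPathOn X P f a c) (ht : IsTautOn X P ν f a c) (ha' : f a' = f p)
    (hc' : f c' = f p') : lenXOn X f p p' ≤ lenXOn X f a' c' + 4 * A := by
  have h₁ := hA.lenXOn_le_of_eq hX hgen i hpa' (by omega) (hf.mono hap (by omega))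
    (ht.mono hap (by omega)) ha'.symm
  have h₂ := hA.lenXOn_le_of_eq hX hgen i hc'p' (by omega) (hf.mono (by omega) hp'c)
    (ht.mono (by omega) hp'c) hc'
  rw [← lenXOn_add_lenXOn hpa' (ha'c'.le.trans hc'p'), ← lenXOn_add_lenXOn ha'c'.le hc'p']
  omega

/-- Tautness makes every edge in `q` other than a longest one shorter than `ν`, so the induction
hypothesis bounds the two sides of a longest edge. -/
theorem lenXOn_le_of_isCosetEdge_max (hA : LenBound X P ν n A) (hca : c ≤ a + (n + 1))
    (hf : IsRelPathOn X P f a c) (ht : IsTautOn X P ν f a c) {i : ι} {q : G ⧸ P i}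
    (ha : (f a : G ⧸ P i) = q) (hc : (f c : G ⧸ P i) = q) {j₀ : ℕ} (hj₀ : a ≤ j₀)
    (hj₀c : j₀ < c) (he₀ : IsCosetEdge P f i q j₀)
    (hmax : ∀ j, a ≤ j → j < c → IsCosetEdge P f i q j →
      wdist X (f j) (f (j + 1)) ≤ wdist X (f j₀) (f (j₀ + 1))) :
    lenXOn X f a c ≤ wdist X (f j₀) (f (j₀ + 1)) + 2 * ν + 2 * A := by
  have hshort : ∀ j, a ≤ j → j < c → j ≠ j₀ → IsCosetEdge P f i q j →
      wdist X (f j) (f (j + 1)) ≤ ν := fun j hj hjc hne he =>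
    (ht.wdist_lt_of_isCosetEdge hj hjc hj₀ hj₀c hne he he₀ (hmax j hj hjc he)).le
  have hleft := hA f a j₀ i q hj₀ (by omega) (hf.mono le_rfl hj₀c.le) (ht.mono le_rfl hj₀c.le)
    ha he₀.1 ν fun j hj hjc he => hshort j hj (by omega) (by omega) he
  have hright := hA f (j₀ + 1) c i q hj₀c (by omega) (hf.mono (by omega) le_rfl)
    (ht.mono (by omega) le_rfl) he₀.2 hc ν fun j hj hjc he => hshort j (by omega) hjc (by omega) he
  have := lenXOn_add_wdist_add_lenXOn (X := X) (f := f) hj₀ hj₀c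
  omega

theorem lenXOn_le_wdist_add_of_isCosetEdge (hA : LenBound X P ν n A) (hX : ∀ x ∈ X, x⁻¹ ∈ X)
    (hgen : Subgroup.closure X = ⊤) (hca : c ≤ a + (n + 1)) (hf : IsRelPathOn X P f a c)
    (ht : IsTautOn X P ν f a c) {i : ι} {q : G ⧸ P i} (ha : (f a : G ⧸ P i) = q)
    (hc : (f c : G ⧸ P i) = q) (hq : ∃ j, a ≤ j ∧ j < c ∧ IsCosetEdge P f i q j) :
    lenXOn X f a c ≤ wdist X (f a) (f c) + 4 * ν + 4 * A := by
  obtain ⟨j₀, hj₀, hj₀c, he₀, hmax⟩ := exists_isCosetEdge_max (X := X) hq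
  have h₁ := hA.lenXOn_le_of_isCosetEdge_max hca hf ht ha hc hj₀ hj₀c he₀ hmax
  have h₂ := two_mul_wdist_le_wdist_add_lenXOn (f := f) hX hgen hj₀ hj₀c
  omega

/-- All vertices of the reduction lie in the coset of `f a`; each step is a proper shortcut inside
that coset unless `f` has an edge in it. -/
theorem lenXOn_le_of_single_component (hA : LenBound X P ν n A) (hX : ∀ x ∈ X, x⁻¹ ∈ X)
    (hgen : Subgroup.closure X = ⊤) (hca : c ≤ a + (n + 1)) (hf : IsRelPathOn X P f a c)
    (ht : IsTautOn X P ν f a c) {b : ℕ → ℕ} {r : ℕ} (hb : IsReduction P f a c b r) (k : ι)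
    (hk : ∀ t < r, (f (b t) : G ⧸ P k) = f (b (t + 1))) :
    lenXOn X f a c ≤ wdist X (f a) (f c) + 4 * ν + 4 * A + r * (5 * A) := by
  have hcos : ∀ t ≤ r, (f (b t) : G ⧸ P k) = f a := fun t ht => by
    rw [← hb.map_zero]
    exact (eq_of_forall_eq_succ (fun s => (f (b s) : G ⧸ P k)) (Nat.zero_le t)
      fun s _ hs => hk s (by omega)).symm
  by_cases hq : ∃ j, a ≤ j ∧ j < c ∧ IsCosetEdge P f k (f a : G ⧸ P k) j
  · have := hA.lenXOn_le_wdist_add_of_isCosetEdge hX hgen hca hf ht rfl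
      (hb.map_length ▸ hcos r le_rfl) hq
    omega
  push Not at hq
  suffices hstep : ∀ t < r, lenXOn X f (b t) (b (t + 1)) ≤ 5 * A by
    have := sum_Ico_le_mul_of_jumps (w := fun j => wdist X (f j) (f (j + 1)))
      (fun t t' h h' => hb.le_of_le h h') fun t ht => ⟨t + 1, by omega, ht, hstep t ht⟩
    rw [hb.map_zero, hb.map_length] at this
    change lenXOn X f a c ≤ _ at this
    omega
  intro t htr
  have := hb.le_map htr.le
  have := hb.map_le (t := t + 1) htr
  obtain ⟨a', c', h₁, h₂, h₃, h₄, h₅, hproper⟩ := (hb.isReducedEdge t htr).exists_proper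
    (by omega) (by omega) (hcos t htr.le) (hcos (t + 1) htr) hq
  have hmid := hA f a' c' k _ h₂.le (by omega) (hf.mono (by omega) (by omega))
    (ht.mono (by omega) (by omega)) (h₄ ▸ hcos t htr.le) (h₅ ▸ hcos (t + 1) htr) 0
    fun j hj hjc he => absurd he (hq j (by omega) (by omega))
  have := hA.lenXOn_le_add_of_loops hX hgen k (by omega) h₁ h₂ h₃ (by omega) hca hf ht h₄ h₅
  omega

/-- A component of the reduction that is not all of it shortcuts a proper subsegment of `f`, with
endpoints in a common coset and, by `BCP`, `X`-close. -/
theorem lenXOn_le_of_isComponent (hA : LenBound X P ν n A) (hX : ∀ x ∈ X, x⁻¹ ∈ X)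
    (hgen : Subgroup.closure X = ⊤) {ε : ℕ} (hε : ComponentSpanBound X P (n + 1) ε)
    (hca : c ≤ a + (n + 1)) (hf : IsRelPathOn X P f a c) (ht : IsTautOn X P ν f a c) (i : ι)
    (hends : (f a : G ⧸ P i) = f c) {b : ℕ → ℕ} {r : ℕ} (hb : IsReduction P f a c b r)
    (hnb : NonBacktrackingFn P (fun t => f (b t)) r) {k : ι} {a₀ c₀ : ℕ}
    (hcomp : IsComponent P (pathList (fun t => f (b t)) r) k a₀ c₀)
    (hproper : 0 < a₀ ∨ c₀ + 1 < r) :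
    lenXOn X f (b a₀) (b (c₀ + 1)) ≤ 2 * ε + wdist X (f a) (f c) + 2 * A := by
  have hc₀ : c₀ + 1 ≤ r := by simpa using hcomp.succ_lt_length
  have := hcomp.1
  have hedge : ∀ s, a₀ ≤ s → s < c₀ + 1 → (f (b s) : G ⧸ P k) = f (b (s + 1)) :=
    fun s h₁ h₂ => (isPEdge_pathList.1 (hcomp.2.1 s h₁ (by omega))).2
  have hspan := hε.wdist_le hf hb hnb hca ⟨i, hends⟩ hcomp
  have hsub : b (c₀ + 1) ≤ b a₀ + n := by
    have := hb.map_zero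
    have := hb.map_length
    rcases hproper with h | h
    · have := hb.lt_of_lt h (by omega)
      have := hb.map_le hc₀
      omega
    · have := hb.lt_of_lt h le_rfl
      have := hb.le_map (t := a₀) (by omega)
      omega
  have := hb.le_map (t := a₀) (by omega)
  have := hA.lenXOn_le_wdist_add hX hgen (hb.le_of_le (by omega) hc₀) hsub
    (hf.mono this (hb.map_le hc₀)) (ht.mono this (hb.map_le hc₀))
    (eq_of_forall_eq_succ (fun s => (f (b s) : G ⧸ P k)) (by omega) hedge)
  omega

theorem lenXOn_le_of_not_single_component (hA : LenBound X P ν n A) (hX : ∀ x ∈ X, x⁻¹ ∈ X)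
    (hgen : Subgroup.closure X = ⊤) {ε : ℕ} (hε : ComponentSpanBound X P (n + 1) ε)
    (hca : c ≤ a + (n + 1)) (hf : IsRelPathOn X P f a c) (ht : IsTautOn X P ν f a c) (i : ι)
    (hends : (f a : G ⧸ P i) = f c) {b : ℕ → ℕ} {r : ℕ} (hb : IsReduction P f a c b r)
    (hnb : NonBacktrackingFn P (fun t => f (b t)) r)
    (hsplit : ∀ k, ∃ t < r, (f (b t) : G ⧸ P k) ≠ f (b (t + 1))) :
    lenXOn X f a c ≤ r * (2 * ε + wdist X (f a) (f c) + 4 * A + 1) := by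
  have hlen := hb.add_le
  suffices hjump : ∀ t < r, ∃ t', t < t' ∧ t' ≤ r ∧
      lenXOn X f (b t) (b t') ≤ 2 * ε + wdist X (f a) (f c) + 4 * A + 1 by
    have := sum_Ico_le_mul_of_jumps (w := fun j => wdist X (f j) (f (j + 1)))
      (fun t t' h h' => hb.le_of_le h h') hjump
    rwa [hb.map_zero, hb.map_length] at this
  intro t htr
  have := hb.le_map htr.le
  have := hb.map_le (t := t + 1) htr
  by_cases hP : ∃ k, (f (b t) : G ⧸ P k) = f (b (t + 1))
  · -- jump over the whole component of the step, a proper subsegment with close endpoints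
    obtain ⟨k, hk⟩ := hP
    obtain ⟨a₀, c₀, hat, htc, hcomp⟩ :=
      exists_isComponent (isPEdge_pathList (u := fun t => f (b t)) |>.2 ⟨htr, hk⟩)
    have hc₀ : c₀ + 1 ≤ r := by simpa using hcomp.succ_lt_length
    have hproper : 0 < a₀ ∨ c₀ + 1 < r := by
      by_contra! h
      obtain ⟨s, hs, hs'⟩ := hsplit k
      exact hs' (isPEdge_pathList.1 (hcomp.2.1 s (by omega) (by omega))).2
    have := hb.le_map (t := a₀) (by omega)
    refine ⟨c₀ + 1, by omega, hc₀, ?_⟩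
    calc lenXOn X f (b t) (b (c₀ + 1)) ≤ lenXOn X f (b a₀) (b (c₀ + 1)) :=
          lenXOn_mono (hb.le_of_le hat (by omega)) le_rfl
      _ ≤ 2 * ε + wdist X (f a) (f c) + 2 * A :=
          hA.lenXOn_le_of_isComponent hX hgen hε hca hf ht i hends hb hnb hcomp hproper
      _ ≤ 2 * ε + wdist X (f a) (f c) + 4 * A + 1 := by omega
  · -- the step is an `X`-edge of `f` between two loops
    push Not at hP
    obtain ⟨a', h₁, h₂, h₃, h₄, hX1⟩ :=
      (hb.isReducedEdge t htr).exists_wdist_le_one (by omega) (by omega) hf hP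
    refine ⟨t + 1, by omega, htr, ?_⟩
    have := hA.lenXOn_le_add_of_loops hX hgen i (by omega) h₁ a'.lt_succ_self h₂ (by omega) hca hf
      ht h₃ h₄
    rw [lenXOn_succ] at this
    omega

theorem lenXOn_le_of_wdist_le (hA : LenBound X P ν n A) (hX : ∀ x ∈ X, x⁻¹ ∈ X)
    (hgen : Subgroup.closure X = ⊤) {ε : ℕ} (hε : ComponentSpanBound X P (n + 1) ε) {γ : ℕ}
    (hac : a ≤ c) (hca : c ≤ a + (n + 1)) (hf : IsRelPathOn X P f a c)
    (ht : IsTautOn X P ν f a c) (i : ι) (hends : (f a : G ⧸ P i) = f c)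
    (hγ : wdist X (f a) (f c) ≤ γ) :
    lenXOn X f a c ≤ (n + 1) * (2 * ε + γ + 4 * ν + 9 * A + 1) := by
  obtain ⟨b, r, hb, hnb⟩ := exists_isReduction_nonBacktrackingFn hf hac
  have hr : r ≤ n + 1 := by have := hb.add_le; omega
  by_cases hsingle : ∃ k, ∀ t < r, (f (b t) : G ⧸ P k) = f (b (t + 1))
  · obtain ⟨k, hk⟩ := hsingle
    have := hA.lenXOn_le_of_single_component hX hgen hca hf ht hb k hk
    nlinarith
  · push Not at hsingle
    have := hA.lenXOn_le_of_not_single_component hX hgen hε hca hf ht i hends hb hnb hsingle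
    nlinarith

end LenBound

theorem exists_lenBound (hX : ∀ x ∈ X, x⁻¹ ∈ X) (hgen : Subgroup.closure X = ⊤)
    (hbcp : BCP X P) (ν : ℕ) : ∀ n, ∃ A, LenBound X P ν n A
  | 0 => ⟨0, fun f a c i q hac hca _ _ _ _ M _ => by
      obtain rfl : c = a := by omega
      simp [lenXOn]⟩
  | n + 1 => by
    obtain ⟨A, hA⟩ := exists_lenBound hX hgen hbcp ν n
    obtain ⟨γ, hγ⟩ := exists_wdist_le_of_not_penetrate hX hgen hbcp (n + 1)
    obtain ⟨ε, hε⟩ := hbcp.exists_componentSpanBound hX hgen (n + 1)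
    refine ⟨2 * ν + 2 * A + (n + 1) * (2 * ε + γ + 4 * ν + 9 * A + 1),
      fun f a c i q hac hca hf ht ha hc M hM => ?_⟩
    by_cases hq : ∃ j, a ≤ j ∧ j < c ∧ IsCosetEdge P f i q j
    · obtain ⟨j₀, hj₀, hj₀c, he₀, hmax⟩ := exists_isCosetEdge_max (X := X) hq
      have := hA.lenXOn_le_of_isCosetEdge_max hca hf ht ha hc hj₀ hj₀c he₀ hmax
      have := hM j₀ hj₀ hj₀c he₀
      omega
    · push Not at hq
      have := hA.lenXOn_le_of_wdist_le hX hgen hε hac hca hf ht i (ha.trans hc.symm)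
        (hγ f a c i q hac hca hf ha hc hq)
      omega

end LengthBound

section VertexFunction

variable {G : Type*} [Group G] {ι : Type*} {X : Set G} {P : ι → Subgroup G} {s : List G}

theorem isRelPathOn_vtx (h : IsRelPath X P s) : IsRelPathOn X P (vtx s) 0 (s.length - 1) := by
  intro j _ hj
  have := List.isChain_iff_getElem.1 h.2 j (by omega)
  simpa only [vtx, List.getD_eq_getElem _ _ (show j < s.length by omega),
    List.getD_eq_getElem _ _ (show j + 1 < s.length by omega), QuotientGroup.eq] using this

theorem isTautOn_vtx {ν : ℕ} (h : Taut X P ν s) : IsTautOn X P ν (vtx s) 0 (s.length - 1) :=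
  fun i j j' _ hjj' hj' hej hej' hcos => h i j j' hjj' ⟨by omega, QuotientGroup.eq.1 hej⟩
    ⟨by omega, QuotientGroup.eq.1 hej'⟩ (QuotientGroup.eq.1 hcos)

theorem lenX_eq_lenXOn : lenX X s = lenXOn X (vtx s) 0 (s.length - 1) := by
  rw [lenX, lenXOn, Finset.range_eq_Ico]

theorem bddAbove_periphEdge_wdist (g : G) (i : ι) :
    BddAbove {m | ∃ j, j + 1 < s.length ∧ g⁻¹ * vtx s j ∈ P i ∧ g⁻¹ * vtx s (j + 1) ∈ P i ∧
      wdist X (vtx s j) (vtx s (j + 1)) = m} := by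
  refine ⟨lenX X s, ?_⟩
  rintro m ⟨j, hj, -, -, rfl⟩
  exact Finset.single_le_sum (f := fun j => wdist X (vtx s j) (vtx s (j + 1)))
    (fun _ _ => Nat.zero_le _) (Finset.mem_range.2 (by omega))

theorem le_maxPeriphEdge {g : G} {i : ι} {j : ℕ} (hj : j + 1 < s.length)
    (h₁ : g⁻¹ * vtx s j ∈ P i) (h₂ : g⁻¹ * vtx s (j + 1) ∈ P i) :
    wdist X (vtx s j) (vtx s (j + 1)) ≤ maxPeriphEdge X P s g i :=
  le_csSup (bddAbove_periphEdge_wdist g i) ⟨j, hj, h₁, h₂, rfl⟩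

theorem maxPeriphEdge_eq_zero_or_exists (g : G) (i : ι) :
    maxPeriphEdge X P s g i = 0 ∨ ∃ j, j + 1 < s.length ∧
      wdist X (vtx s j) (vtx s (j + 1)) = maxPeriphEdge X P s g i := by
  rcases Set.eq_empty_or_nonempty {m | ∃ j, j + 1 < s.length ∧ g⁻¹ * vtx s j ∈ P i ∧
      g⁻¹ * vtx s (j + 1) ∈ P i ∧ wdist X (vtx s j) (vtx s (j + 1)) = m} with h | h
  · left
    rw [maxPeriphEdge, h, csSup_empty, Nat.bot_eq_zero]
  · obtain ⟨j, hj, -, -, hM⟩ := Nat.sSup_mem h (bddAbove_periphEdge_wdist g i)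
    exact Or.inr ⟨j, hj, hM⟩

end VertexFunction

section

variable {G : Type*} [Group G] {ι : Type*}

/-- For all `ν, ℓ` there is `α` such that any `ν`-taut path `s` of length `ℓ` in the
relative Cayley graph with both endpoints in a peripheral coset `g • P i` satisfies
`M(s) − α ≤ |s|_X ≤ len_X(s) ≤ M(s) + α`. -/
theorem taut_peripheral_endpoint_bounds (X : Set G) (P : ι → Subgroup G)
    (hrel : RelHypPair X P) (ν ℓ : ℕ) :
    ∃ α : ℕ, ∀ (s : List G) (g : G) (i : ι),
      IsRelPath X P s → Taut X P ν s → s.length = ℓ + 1 →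
      g⁻¹ * vtx s 0 ∈ P i → g⁻¹ * vtx s (s.length - 1) ∈ P i →
      (maxPeriphEdge X P s g i : ℤ) - (α : ℤ) ≤
          (wdist X (vtx s 0) (vtx s (s.length - 1)) : ℤ) ∧
        wdist X (vtx s 0) (vtx s (s.length - 1)) ≤ lenX X s ∧
        (lenX X s : ℤ) ≤ (maxPeriphEdge X P s g i : ℤ) + (α : ℤ) := by
  obtain ⟨-, hX, hgen, -, hbcp⟩ := hrel
  obtain ⟨A, hA⟩ := exists_lenBound hX hgen hbcp ν ℓ
  refine ⟨A, fun s g i hs ht hlen hg₀ hgℓ => ?_⟩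
  have hlenX : lenX X s ≤ maxPeriphEdge X P s g i + A := by
    rw [lenX_eq_lenXOn]
    exact hA (vtx s) 0 (s.length - 1) i g (Nat.zero_le _) (by omega) (isRelPathOn_vtx hs)
      (isTautOn_vtx ht) (QuotientGroup.eq.2 hg₀).symm (QuotientGroup.eq.2 hgℓ).symm _
      fun j _ hj ⟨h₁, h₂⟩ => le_maxPeriphEdge (by omega) (QuotientGroup.eq.1 h₁.symm)
        (QuotientGroup.eq.1 h₂.symm)
  have hd : wdist X (vtx s 0) (vtx s (s.length - 1)) ≤ lenX X s :=
    lenX_eq_lenXOn (X := X) ▸ wdist_le_lenXOn hX hgen (Nat.zero_le _)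
  refine ⟨?_, hd, by omega⟩
  rcases maxPeriphEdge_eq_zero_or_exists (X := X) (P := P) (s := s) g i with hM | ⟨j, hj, hM⟩
  · omega
  · have := two_mul_wdist_le_wdist_add_lenXOn (f := vtx s) hX hgen (Nat.zero_le j)
      (show j < s.length - 1 by omega)
    rw [← lenX_eq_lenXOn, hM] at this
    omega

end
end
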